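/- arXiv:2205.05556 — 5 statements merged into one kernel-verified Lean document; each statement's English description precedes it below -/
import Mathlib

section
/- Let (X,d) be a complete metric space, I a discrete interval unbounded below, and suppose (Δ) u_{t+1} = F_t(u_t) has a nonempty, positively invariant, closed and bounded nonautonomous subset 𝓐 with 𝓐(t) ⊆ U_t for all t. If (Δ) is pullback asymptotically compact, then the fibres 𝓐⋆(τ) := ⋂_{s≥0} φ(τ;τ−s,𝓐(τ−s)), τ ∈ I, define a nonempty, compact, invariant nonautonomous set 𝓐⋆ ⊆ 𝓐 which is maximal among invariant nonautonomous subsets of 𝓐 and which pullback attracts 𝓐, i.e. lim_{s→∞} dist(φ(τ;τ−s,𝓐(τ−s)), 𝓐⋆(τ)) = 0 for all τ ∈ I. -/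
open Filter Topology Metric Bornology

/-- Iterates of a nonautonomous difference equation: `sol F τ u n = φ(τ+n; τ, u)`. -/
def sol {X : Type*} (F : ℤ → X → X) (τ : ℤ) (u : X) : ℕ → X
  | 0 => u
  | n + 1 => F (τ + (n : ℤ)) (sol F τ u n)

/-- General solution `φ(t; τ, u)` of the difference equation `u_{t+1} = F_t(u_t)`. -/
def phi {X : Type*} (F : ℤ → X → X) (t τ : ℤ) (u : X) : X :=
  sol F τ u (t - τ).toNat

/-- Hausdorff semidistance `dist(A,B) = sup_{a ∈ A} inf_{b ∈ B} d(a,b)`. -/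
noncomputable def semidist {X : Type*} [MetricSpace X] (A B : Set X) : ℝ :=
  sSup ((fun a => Metric.infDist a B) '' A)

/-!
The sections `φ(τ; τ-s, 𝓐(τ-s))` decrease in `s` by positive invariance. The heart of the proof
is that every sequence `bₙ ∈ φ(τ; τ-n, 𝓐(τ-n))` has a subsequence converging to a point of
`𝓐⋆(τ)`: for a fixed `s₀` write `bₙ = φ(τ; τ-s₀, cₙ)` with `cₙ` in a section at time `τ-s₀`;
asymptotic compactness at `τ-s₀` and closedness of `𝓐(τ-s₀)` give a limit `cₙ → y ∈ 𝓐(τ-s₀)`,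
and continuity of `φ(τ; τ-s₀, ·)` shows that the limit of `bₙ` is `φ(τ; τ-s₀, y)`.
Nonemptiness, sequential compactness, invariance (via continuity of `F_t`) and pullback attraction
(a sequence staying `ε` away from `𝓐⋆(τ)` would have such a limit) all follow from this.
Maximality holds because an invariant `𝓒 ⊆ 𝓐` satisfies `𝓒(τ) = φ(τ; τ-s, 𝓒(τ-s))`.
-/

open Set

section Solutions

variable {X : Type*} {F : ℤ → X → X}

theorem phi_self (F : ℤ → X → X) (t : ℤ) (u : X) : phi F t t u = u := by
  simp [phi, sol]

theorem phi_succ {r t : ℤ} (hrt : r ≤ t) (u : X) : phi F (t + 1) r u = F t (phi F t r u) := by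
  unfold phi
  rw [show (t + 1 - r).toNat = (t - r).toNat + 1 by omega, sol]
  congr 1
  omega

theorem phi_succ_self (t : ℤ) (u : X) : phi F (t + 1) t u = F t u := by
  rw [phi_succ le_rfl, phi_self]

theorem phi_comp {q r t : ℤ} (hqr : q ≤ r) (hrt : r ≤ t) (u : X) :
    phi F t r (phi F r q u) = phi F t q u := by
  induction t, hrt using Int.leInduction with
  | base => rw [phi_self]
  | succ t hrt ih => rw [phi_succ hrt, phi_succ (hqr.trans hrt), ih]

theorem mapsTo_phi {I : Set ℤ} {A : ℤ → Set X} (hI : IsLowerSet I)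
    (hA : ∀ t, t ∈ I → t + 1 ∈ I → MapsTo (F t) (A t) (A (t + 1)))
    {r t : ℤ} (hrt : r ≤ t) (ht : t ∈ I) : MapsTo (phi F t r) (A r) (A t) := by
  induction t, hrt using Int.leInduction with
  | base => exact fun u hu => by rwa [phi_self]
  | succ t hrt ih =>
    have ht' : t ∈ I := hI (by omega) ht
    exact fun u hu => by rw [phi_succ hrt]; exact hA t ht' ht (ih ht' hu)

theorem continuousOn_phi [TopologicalSpace X] {I : Set ℤ} {A : ℤ → Set X} (hI : IsLowerSet I)
    (hA : ∀ t, t ∈ I → t + 1 ∈ I → MapsTo (F t) (A t) (A (t + 1)))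
    (hF : ∀ t, t ∈ I → t + 1 ∈ I → ContinuousOn (F t) (A t))
    {r t : ℤ} (hrt : r ≤ t) (ht : t ∈ I) : ContinuousOn (phi F t r) (A r) := by
  induction t, hrt using Int.leInduction with
  | base =>
    rw [show phi F r r = id from funext (phi_self F r)]
    exact continuousOn_id
  | succ t hrt ih =>
    have ht' : t ∈ I := hI (by omega) ht
    rw [show phi F (t + 1) r = F t ∘ phi F t r from funext (phi_succ hrt)]
    exact (hF t ht' ht).comp (ih ht') (mapsTo_phi hI hA hrt ht')

end Solutions

section PullbackImage

variable {X : Type*} {F : ℤ → X → X} {A : ℤ → Set X}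

def pullbackImage (F : ℤ → X → X) (A : ℤ → Set X) (τ : ℤ) (s : ℕ) : Set X :=
  phi F τ (τ - s) '' A (τ - s)

def pullbackLimitSet (F : ℤ → X → X) (A : ℤ → Set X) (τ : ℤ) : Set X :=
  ⋂ s : ℕ, pullbackImage F A τ s

theorem pullbackImage_zero (τ : ℤ) : pullbackImage F A τ 0 = A τ := by
  simp [pullbackImage, phi_self]

theorem pullbackImage_add (τ : ℤ) (s m : ℕ) :
    pullbackImage F A τ (s + m) = phi F τ (τ - s) '' pullbackImage F A (τ - s) m := by
  rw [pullbackImage, pullbackImage, image_image, sub_sub, ← Nat.cast_add]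
  exact image_congr fun u _ => (phi_comp (by omega) (by omega) u).symm

theorem pullbackImage_succ (t : ℤ) (s : ℕ) :
    pullbackImage F A (t + 1) (s + 1) = F t '' pullbackImage F A t s := by
  rw [add_comm s, pullbackImage_add, Nat.cast_one, add_sub_cancel_right]
  exact image_congr fun u _ => phi_succ_self t u

theorem pullbackLimitSet_subset (τ : ℤ) : pullbackLimitSet F A τ ⊆ A τ := by
  rw [← pullbackImage_zero (F := F) (A := A) τ]
  exact iInter_subset _ 0

variable {I : Set ℤ} {τ : ℤ}

theorem pullbackImage_subset (hI : IsLowerSet I)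
    (hA : ∀ t, t ∈ I → t + 1 ∈ I → MapsTo (F t) (A t) (A (t + 1))) (hτ : τ ∈ I) (s : ℕ) :
    pullbackImage F A τ s ⊆ A τ :=
  (mapsTo_phi hI hA (by omega) hτ).image_subset

theorem antitone_pullbackImage (hI : IsLowerSet I)
    (hA : ∀ t, t ∈ I → t + 1 ∈ I → MapsTo (F t) (A t) (A (t + 1))) (hτ : τ ∈ I) :
    Antitone (pullbackImage F A τ) := by
  intro s s' hss'
  obtain ⟨m, rfl⟩ := Nat.exists_eq_add_of_le hss'
  rw [pullbackImage_add]
  exact image_mono (pullbackImage_subset hI hA (hI (by omega) hτ) m)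

theorem subset_pullbackLimitSet {C : ℤ → Set X} (hI : IsLowerSet I) (hCA : ∀ t ∈ I, C t ⊆ A t)
    (hC : ∀ t, t ∈ I → t + 1 ∈ I → F t '' C t = C (t + 1)) (hτ : τ ∈ I) :
    C τ ⊆ pullbackLimitSet F A τ := by
  suffices h : ∀ s : ℕ, ∀ t ∈ I, C t ⊆ pullbackImage F A t s from
    subset_iInter fun s => h s τ hτ
  intro s
  induction s with
  | zero => exact fun t ht => pullbackImage_zero t ▸ hCA t ht
  | succ s ih =>
    intro t ht
    obtain ⟨r, rfl⟩ : ∃ r, t = r + 1 := ⟨t - 1, by ring⟩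
    have hr : r ∈ I := hI (by omega) ht
    rw [← hC r hr ht, pullbackImage_succ]
    exact image_mono (ih r hr)

end PullbackImage

section Attraction

variable {X : Type*} [MetricSpace X] {F : ℤ → X → X} {A : ℤ → Set X} {I : Set ℤ} {τ : ℤ}

theorem semidist_nonneg (A B : Set X) : 0 ≤ semidist A B :=
  Real.sSup_nonneg <| forall_mem_image.2 fun _ _ => infDist_nonneg

theorem semidist_le {A B : Set X} {r : ℝ} (h : ∀ a ∈ A, infDist a B ≤ r) (hr : 0 ≤ r) :
    semidist A B ≤ r :=
  Real.sSup_le (forall_mem_image.2 h) hr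

/-- Asymptotic compactness, required only of sequences drawn from the pullback images of `A`. -/
def PullbackAsymptoticallyCompact (F : ℤ → X → X) (A : ℤ → Set X) (τ : ℤ) : Prop :=
  ∀ s : ℕ → ℕ, Tendsto s atTop atTop → ∀ b : ℕ → X, (∀ n, b n ∈ pullbackImage F A τ (s n)) →
    ∃ ψ : ℕ → ℕ, StrictMono ψ ∧ ∃ x, Tendsto (b ∘ ψ) atTop (𝓝 x)

theorem PullbackAsymptoticallyCompact.of_isBounded {U : ℤ → Set X} (hI : IsLowerSet I)
    (hAU : ∀ t ∈ I, A t ⊆ U t) (hAbd : ∃ C : Set X, IsBounded C ∧ ∀ t ∈ I, A t ⊆ C)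
    (hτ : τ ∈ I)
    (hpac : ∀ s : ℕ → ℕ, Tendsto s atTop atTop →
      ∀ a : ℕ → X, (∀ n, a n ∈ U (τ - (s n : ℤ))) → IsBounded (range a) →
        ∃ ψ : ℕ → ℕ, StrictMono ψ ∧
          ∃ x : X, Tendsto (fun n => phi F τ (τ - (s (ψ n) : ℤ)) (a (ψ n))) atTop (𝓝 x)) :
    PullbackAsymptoticallyCompact F A τ := by
  intro s hs b hb
  choose a ha hab using hb
  obtain ⟨C, hC, hAC⟩ := hAbd
  have hτs : ∀ n, τ - (s n : ℤ) ∈ I := fun n => hI (by omega) hτ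
  obtain ⟨ψ, hψ, x, hx⟩ := hpac s hs a (fun n => hAU _ (hτs n) (ha n))
    (hC.subset (range_subset_iff.2 fun n => hAC _ (hτs n) (ha n)))
  exact ⟨ψ, hψ, x, by simpa only [Function.comp_def, hab] using hx⟩

theorem mem_pullbackImage_of_tendsto (hI : IsLowerSet I)
    (hA : ∀ t, t ∈ I → t + 1 ∈ I → MapsTo (F t) (A t) (A (t + 1)))
    (hF : ∀ t, t ∈ I → t + 1 ∈ I → ContinuousOn (F t) (A t)) (hAcl : ∀ t ∈ I, IsClosed (A t))
    {s₀ : ℕ} (hpac : PullbackAsymptoticallyCompact F A (τ - s₀)) (hτ : τ ∈ I)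
    {s : ℕ → ℕ} (hs : Tendsto s atTop atTop) (hs₀ : ∀ n, s₀ ≤ s n)
    {b : ℕ → X} (hb : ∀ n, b n ∈ pullbackImage F A τ (s n))
    {x : X} (hx : Tendsto b atTop (𝓝 x)) : x ∈ pullbackImage F A τ s₀ := by
  have hτ₀ : τ - s₀ ∈ I := hI (by omega) hτ
  have hc : ∀ n, ∃ c ∈ pullbackImage F A (τ - s₀) (s n - s₀), phi F τ (τ - s₀) c = b n := by
    intro n
    change b n ∈ phi F τ (τ - s₀) '' _
    rw [← pullbackImage_add, Nat.add_sub_cancel' (hs₀ n)]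
    exact hb n
  choose c hc hcb using hc
  obtain ⟨ψ, hψ, y, hy⟩ := hpac _ ((tendsto_sub_atTop_nat s₀).comp hs) c hc
  have hcA : ∀ n, c n ∈ A (τ - s₀) := fun n => pullbackImage_subset hI hA hτ₀ _ (hc n)
  have hyA : y ∈ A (τ - s₀) := (hAcl _ hτ₀).mem_of_tendsto hy (.of_forall fun n => hcA (ψ n))
  refine ⟨y, hyA, tendsto_nhds_unique ?_ (hx.comp hψ.tendsto_atTop)⟩
  have hphi := ((continuousOn_phi hI hA hF (by omega) hτ) y hyA).tendsto.comp
    (tendsto_nhdsWithin_iff.2 ⟨hy, .of_forall fun n => hcA (ψ n)⟩)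
  simpa only [Function.comp_def, hcb] using hphi

theorem mem_pullbackLimitSet_of_tendsto (hI : IsLowerSet I)
    (hA : ∀ t, t ∈ I → t + 1 ∈ I → MapsTo (F t) (A t) (A (t + 1)))
    (hF : ∀ t, t ∈ I → t + 1 ∈ I → ContinuousOn (F t) (A t)) (hAcl : ∀ t ∈ I, IsClosed (A t))
    (hpac : ∀ t ∈ I, PullbackAsymptoticallyCompact F A t) (hτ : τ ∈ I)
    {s : ℕ → ℕ} (hs : Tendsto s atTop atTop)
    {b : ℕ → X} (hb : ∀ n, b n ∈ pullbackImage F A τ (s n))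
    {x : X} (hx : Tendsto b atTop (𝓝 x)) : x ∈ pullbackLimitSet F A τ := by
  refine mem_iInter.2 fun s₀ => ?_
  obtain ⟨N, hN⟩ := eventually_atTop.1 (hs.eventually_ge_atTop s₀)
  exact mem_pullbackImage_of_tendsto hI hA hF hAcl (hpac _ (hI (by omega) hτ)) hτ
    ((tendsto_add_atTop_iff_nat N).2 hs) (fun n => hN _ (by omega)) (fun n => hb (n + N))
    ((tendsto_add_atTop_iff_nat N).2 hx)

theorem exists_tendsto_pullbackLimitSet (hI : IsLowerSet I)
    (hA : ∀ t, t ∈ I → t + 1 ∈ I → MapsTo (F t) (A t) (A (t + 1)))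
    (hF : ∀ t, t ∈ I → t + 1 ∈ I → ContinuousOn (F t) (A t)) (hAcl : ∀ t ∈ I, IsClosed (A t))
    (hpac : ∀ t ∈ I, PullbackAsymptoticallyCompact F A t) (hτ : τ ∈ I)
    {b : ℕ → X} (hb : ∀ n, b n ∈ pullbackImage F A τ n) :
    ∃ ψ : ℕ → ℕ, StrictMono ψ ∧ ∃ y ∈ pullbackLimitSet F A τ, Tendsto (b ∘ ψ) atTop (𝓝 y) := by
  obtain ⟨ψ, hψ, y, hy⟩ := hpac τ hτ id tendsto_id b hb
  exact ⟨ψ, hψ, y, mem_pullbackLimitSet_of_tendsto hI hA hF hAcl hpac hτ hψ.tendsto_atTop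
    (fun n => hb (ψ n)) hy, hy⟩

theorem pullbackLimitSet_nonempty (hI : IsLowerSet I)
    (hA : ∀ t, t ∈ I → t + 1 ∈ I → MapsTo (F t) (A t) (A (t + 1)))
    (hF : ∀ t, t ∈ I → t + 1 ∈ I → ContinuousOn (F t) (A t)) (hAcl : ∀ t ∈ I, IsClosed (A t))
    (hpac : ∀ t ∈ I, PullbackAsymptoticallyCompact F A t) (hAne : ∀ t ∈ I, (A t).Nonempty)
    (hτ : τ ∈ I) : (pullbackLimitSet F A τ).Nonempty := by
  choose b hb using fun n : ℕ => (hAne (τ - n) (hI (by omega) hτ)).image (phi F τ (τ - n))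
  obtain ⟨-, -, y, hy, -⟩ := exists_tendsto_pullbackLimitSet hI hA hF hAcl hpac hτ hb
  exact ⟨y, hy⟩

theorem isCompact_pullbackLimitSet (hI : IsLowerSet I)
    (hA : ∀ t, t ∈ I → t + 1 ∈ I → MapsTo (F t) (A t) (A (t + 1)))
    (hF : ∀ t, t ∈ I → t + 1 ∈ I → ContinuousOn (F t) (A t)) (hAcl : ∀ t ∈ I, IsClosed (A t))
    (hpac : ∀ t ∈ I, PullbackAsymptoticallyCompact F A t) (hτ : τ ∈ I) :
    IsCompact (pullbackLimitSet F A τ) := by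
  refine IsSeqCompact.isCompact fun b hb => ?_
  obtain ⟨ψ, hψ, y, hy, hby⟩ :=
    exists_tendsto_pullbackLimitSet hI hA hF hAcl hpac hτ fun n => mem_iInter.1 (hb n) n
  exact ⟨y, hy, ψ, hψ, hby⟩

theorem image_pullbackLimitSet (hI : IsLowerSet I)
    (hA : ∀ t, t ∈ I → t + 1 ∈ I → MapsTo (F t) (A t) (A (t + 1)))
    (hF : ∀ t, t ∈ I → t + 1 ∈ I → ContinuousOn (F t) (A t)) (hAcl : ∀ t ∈ I, IsClosed (A t))
    (hpac : ∀ t ∈ I, PullbackAsymptoticallyCompact F A t) {t : ℤ} (ht : t ∈ I) (ht1 : t + 1 ∈ I) :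
    F t '' pullbackLimitSet F A t = pullbackLimitSet F A (t + 1) := by
  refine Subset.antisymm ?_ fun x hx => ?_
  · refine (image_iInter_subset _ _).trans (subset_iInter fun s => ?_)
    refine (iInter_subset _ s).trans ?_
    rw [← pullbackImage_succ]
    exact antitone_pullbackImage hI hA ht1 s.le_succ
  · have hx' : ∀ n : ℕ, x ∈ F t '' pullbackImage F A t n := fun n => by
      rw [← pullbackImage_succ]
      exact mem_iInter.1 hx (n + 1)
    choose b hb hbx using hx'
    obtain ⟨ψ, -, y, hy, hby⟩ := exists_tendsto_pullbackLimitSet hI hA hF hAcl hpac ht hb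
    have hbA : ∀ n, b n ∈ A t := fun n => pullbackImage_subset hI hA ht n (hb n)
    have hFb := ((hF t ht ht1) y (pullbackLimitSet_subset t hy)).tendsto.comp
      (tendsto_nhdsWithin_iff.2 ⟨hby, .of_forall fun n => hbA (ψ n)⟩)
    simp only [Function.comp_def, hbx] at hFb
    exact ⟨y, hy, tendsto_nhds_unique hFb tendsto_const_nhds⟩

theorem tendsto_semidist_pullbackLimitSet (hI : IsLowerSet I)
    (hA : ∀ t, t ∈ I → t + 1 ∈ I → MapsTo (F t) (A t) (A (t + 1)))
    (hF : ∀ t, t ∈ I → t + 1 ∈ I → ContinuousOn (F t) (A t)) (hAcl : ∀ t ∈ I, IsClosed (A t))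
    (hpac : ∀ t ∈ I, PullbackAsymptoticallyCompact F A t) (hτ : τ ∈ I) :
    Tendsto (fun s => semidist (pullbackImage F A τ s) (pullbackLimitSet F A τ)) atTop (𝓝 0) := by
  have hclose : ∀ ε > 0, ∃ N, ∀ x ∈ pullbackImage F A τ N,
      infDist x (pullbackLimitSet F A τ) < ε := by
    intro ε hε
    by_contra! hfar
    choose b hb hbε using hfar
    obtain ⟨ψ, -, y, hy, hby⟩ := exists_tendsto_pullbackLimitSet hI hA hF hAcl hpac hτ hb
    have hε_le := ge_of_tendsto (((continuous_infDist_pt _).tendsto y).comp hby)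
      (.of_forall fun n => hbε (ψ n))
    rw [infDist_zero_of_mem hy] at hε_le
    linarith
  rw [Metric.tendsto_atTop]
  intro ε hε
  obtain ⟨N, hN⟩ := hclose (ε / 2) (by positivity)
  refine ⟨N, fun s hs => ?_⟩
  rw [Real.dist_eq, sub_zero, abs_of_nonneg (semidist_nonneg _ _)]
  calc semidist (pullbackImage F A τ s) (pullbackLimitSet F A τ) ≤ ε / 2 :=
        semidist_le (fun x hx => (hN x (antitone_pullbackImage hI hA hτ hs hx)).le) (by positivity)
    _ < ε := by linarith

end Attraction

theorem pullback_construction_general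
    {X : Type*} [MetricSpace X]
    -- discrete interval I, unbounded below
    (I : Set ℤ) (hI : ∀ ⦃a b c : ℤ⦄, a ∈ I → c ∈ I → a ≤ b → b ≤ c → b ∈ I)
    (hIlb : ∀ t : ℤ, ∃ s ∈ I, s ≤ t)
    -- the closed sets U_t and the right-hand sides F_t : U_t → U_{t+1}
    (U : ℤ → Set X)
    (F : ℤ → X → X)
    (hFc : ∀ t, t ∈ I → t + 1 ∈ I → ContinuousOn (F t) (U t))
    -- 𝓐: nonempty, positively invariant, closed and bounded nonautonomous set in 𝓤
    (A : ℤ → Set X)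
    (hAU : ∀ t ∈ I, A t ⊆ U t)
    (hAne : ∀ t ∈ I, (A t).Nonempty)
    (hAcl : ∀ t ∈ I, IsClosed (A t))
    (hAbd : ∃ C : Set X, IsBounded C ∧ ∀ t ∈ I, A t ⊆ C)
    (hApos : ∀ t, t ∈ I → t + 1 ∈ I → ∀ u ∈ A t, F t u ∈ A (t + 1))
    -- pullback asymptotic compactness
    (hpac : ∀ τ ∈ I, ∀ s : ℕ → ℕ, Tendsto s atTop atTop →
      ∀ a : ℕ → X, (∀ n, a n ∈ U (τ - (s n : ℤ))) → IsBounded (Set.range a) →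
        ∃ ψ : ℕ → ℕ, StrictMono ψ ∧
          ∃ x : X, Tendsto (fun n => phi F τ (τ - (s (ψ n) : ℤ)) (a (ψ n))) atTop (𝓝 x))
    -- the fibres 𝓐⋆(τ)
    (Astar : ℤ → Set X)
    (hAstar : ∀ τ : ℤ, Astar τ = ⋂ s : ℕ, phi F τ (τ - (s : ℤ)) '' A (τ - (s : ℤ))) :
    -- conclusion: nonempty, compact, contained in 𝓐, invariant, maximal, pullback attracting
    (∀ τ ∈ I, (Astar τ).Nonempty ∧ IsCompact (Astar τ) ∧ Astar τ ⊆ A τ) ∧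
    (∀ t, t ∈ I → t + 1 ∈ I → F t '' Astar t = Astar (t + 1)) ∧
    (∀ C : ℤ → Set X, (∀ t ∈ I, C t ⊆ A t) →
      (∀ t, t ∈ I → t + 1 ∈ I → F t '' C t = C (t + 1)) →
      ∀ t ∈ I, C t ⊆ Astar t) ∧
    (∀ τ ∈ I,
      Tendsto (fun s : ℕ => semidist (phi F τ (τ - (s : ℤ)) '' A (τ - (s : ℤ))) (Astar τ))
        atTop (𝓝 0)) := by
  obtain rfl : Astar = pullbackLimitSet F A := funext hAstar
  have hIlow : IsLowerSet I := fun b a hab hb =>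
    let ⟨c, hc, hca⟩ := hIlb a
    hI hc hb hca hab
  have hFA : ∀ t, t ∈ I → t + 1 ∈ I → ContinuousOn (F t) (A t) :=
    fun t ht ht1 => (hFc t ht ht1).mono (hAU t ht)
  have hpacA : ∀ τ ∈ I, PullbackAsymptoticallyCompact F A τ :=
    fun τ hτ => .of_isBounded hIlow hAU hAbd hτ (hpac τ hτ)
  exact ⟨fun τ hτ => ⟨pullbackLimitSet_nonempty hIlow hApos hFA hAcl hpacA hAne hτ,
      isCompact_pullbackLimitSet hIlow hApos hFA hAcl hpacA hτ, pullbackLimitSet_subset τ⟩,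
    fun t ht ht1 => image_pullbackLimitSet hIlow hApos hFA hAcl hpacA ht ht1,
    fun C hCA hC t ht => subset_pullbackLimitSet hIlow hCA hC ht,
    fun τ hτ => tendsto_semidist_pullbackLimitSet hIlow hApos hFA hAcl hpacA hτ⟩

/-- the pullback construction `𝓐⋆` yields a nonempty, compact,
invariant, maximal nonautonomous set pullback attracting `𝓐` (Proposition 1). -/
theorem pullback_construction
    {X : Type*} [MetricSpace X] [CompleteSpace X]
    -- discrete interval I, unbounded below
    (I : Set ℤ) (hI : ∀ ⦃a b c : ℤ⦄, a ∈ I → c ∈ I → a ≤ b → b ≤ c → b ∈ I)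
    (hIlb : ∀ t : ℤ, ∃ s ∈ I, s ≤ t)
    -- the closed sets U_t and the right-hand sides F_t : U_t → U_{t+1}
    (U : ℤ → Set X) (hUcl : ∀ t ∈ I, IsClosed (U t))
    (F : ℤ → X → X)
    (hFc : ∀ t, t ∈ I → t + 1 ∈ I → ContinuousOn (F t) (U t))
    (hFmap : ∀ t, t ∈ I → t + 1 ∈ I → ∀ u ∈ U t, F t u ∈ U (t + 1))
    -- 𝓐: nonempty, positively invariant, closed and bounded nonautonomous set in 𝓤
    (A : ℤ → Set X)
    (hAU : ∀ t ∈ I, A t ⊆ U t)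
    (hAne : ∀ t ∈ I, (A t).Nonempty)
    (hAcl : ∀ t ∈ I, IsClosed (A t))
    (hAbd : ∃ C : Set X, IsBounded C ∧ ∀ t ∈ I, A t ⊆ C)
    (hApos : ∀ t, t ∈ I → t + 1 ∈ I → ∀ u ∈ A t, F t u ∈ A (t + 1))
    -- pullback asymptotic compactness
    (hpac : ∀ τ ∈ I, ∀ s : ℕ → ℕ, Tendsto s atTop atTop →
      ∀ a : ℕ → X, (∀ n, a n ∈ U (τ - (s n : ℤ))) → IsBounded (Set.range a) →
        ∃ ψ : ℕ → ℕ, StrictMono ψ ∧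
          ∃ x : X, Tendsto (fun n => phi F τ (τ - (s (ψ n) : ℤ)) (a (ψ n))) atTop (𝓝 x))
    -- the fibres 𝓐⋆(τ)
    (Astar : ℤ → Set X)
    (hAstar : ∀ τ : ℤ, Astar τ = ⋂ s : ℕ, phi F τ (τ - (s : ℤ)) '' A (τ - (s : ℤ))) :
    -- conclusion: nonempty, compact, contained in 𝓐, invariant, maximal, pullback attracting
    (∀ τ ∈ I, (Astar τ).Nonempty ∧ IsCompact (Astar τ) ∧ Astar τ ⊆ A τ) ∧
    (∀ t, t ∈ I → t + 1 ∈ I → F t '' Astar t = Astar (t + 1)) ∧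
    (∀ C : ℤ → Set X, (∀ t ∈ I, C t ⊆ A t) →
      (∀ t, t ∈ I → t + 1 ∈ I → F t '' C t = C (t + 1)) →
      ∀ t ∈ I, C t ⊆ Astar t) ∧
    (∀ τ ∈ I,
      Tendsto (fun s : ℕ => semidist (phi F τ (τ - (s : ℤ)) '' A (τ - (s : ℤ))) (Astar τ))
        atTop (𝓝 0)) :=
  pullback_construction_general I hI hIlb U F hFc A hAU hAne hAcl hAbd hApos hpac Astar hAstar
end

section
/- Let (X,d) be a complete metric space, I a discrete interval unbounded above, U ⊆ X closed, F_t : U → U continuous, and let 𝓐 ⊆ I×U be a nonempty bounded nonautonomous set such that (Δ) u_{t+1} = F_t(u_t) is 𝓐-asymptotically compact with compact K ⊆ U. If 𝓐 is in addition positively invariant (F_t(𝓐(t)) ⊆ 𝓐(t+1) for all t), then the forward limit fibres are nested: Ω_𝓐(τ) ⊆ Ω_𝓐(τ+1) for all τ ∈ I. -/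
open Filter Topology Metric Bornology

lemma sol_shift {X : Type*} (F : ℤ → X → X) (τ : ℤ) (u : X) :
    ∀ n : ℕ, sol F (τ + 1) (F τ u) n = sol F τ u (n + 1)
  | 0 => by simp [sol]
  | n + 1 => by
    have ih := sol_shift F τ u n
    simp only [sol, ih]
    congr 1
    push_cast
    ring

/-- for positively invariant 𝓐 the forward limit fibres are
nested: Ω_𝓐(τ) ⊆ Ω_𝓐(τ+1) (Corollary 1 of the paper). -/
theorem forward_limit_fibres_nested
    {X : Type*} [MetricSpace X] [CompleteSpace X]
    -- discrete interval I, unbounded above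
    (I : Set ℤ) (hI : ∀ ⦃a b c : ℤ⦄, a ∈ I → c ∈ I → a ≤ b → b ≤ c → b ∈ I)
    (hIub : ∀ t : ℤ, ∃ s ∈ I, t ≤ s)
    -- closed state space U and right-hand sides F_t : U → U
    (U : Set X) (hUcl : IsClosed U)
    (F : ℤ → X → X)
    (hFc : ∀ t ∈ I, ContinuousOn (F t) U)
    (hFmap : ∀ t ∈ I, ∀ u ∈ U, F t u ∈ U)
    -- 𝓐: nonempty bounded nonautonomous set in I × U
    (A : ℤ → Set X)
    (hAU : ∀ t ∈ I, A t ⊆ U)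
    (hAne : ∀ t ∈ I, (A t).Nonempty)
    (hAbd : ∃ C : Set X, IsBounded C ∧ ∀ t ∈ I, A t ⊆ C)
    -- 𝓐-asymptotic compactness with compact K ⊆ U
    (K : Set X) (hKcpt : IsCompact K) (hKU : K ⊆ U)
    (hac : ∀ τ ∈ I,
      Tendsto (fun s : ℕ => semidist (phi F (τ + (s : ℤ)) τ '' A τ) K) atTop (𝓝 0))
    -- the forward limit fibres Ω_𝓐(τ)
    (Om : ℤ → Set X)
    (hOm : ∀ τ : ℤ, Om τ =
      ⋂ s : ℕ, closure (⋃ t : ℕ, ⋃ (_ : s ≤ t), phi F (τ + (t : ℤ)) τ '' A τ))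
    -- 𝓐 is positively invariant
    (hApos : ∀ t ∈ I, ∀ u ∈ A t, F t u ∈ A (t + 1)) :
    ∀ τ ∈ I, Om τ ⊆ Om (τ + 1) := by
  intro τ hτ x hx
  rw [hOm] at hx ⊢
  simp only [Set.mem_iInter] at hx ⊢
  intro s
  have key : (⋃ t : ℕ, ⋃ (_ : s + 1 ≤ t), phi F (τ + (t : ℤ)) τ '' A τ)
      ⊆ ⋃ t : ℕ, ⋃ (_ : s ≤ t), phi F (τ + 1 + (t : ℤ)) (τ + 1) '' A (τ + 1) := by
    intro y hy
    simp only [Set.mem_iUnion, Set.mem_image] at hy ⊢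
    obtain ⟨t, ht, u, hu, rfl⟩ := hy
    obtain ⟨n, rfl⟩ : ∃ n, t = n + 1 := ⟨t - 1, by omega⟩
    refine ⟨n, by omega, F τ u, hApos τ hτ u hu, ?_⟩
    unfold phi
    have h1 : (τ + 1 + (n : ℤ) - (τ + 1)).toNat = n := by omega
    have h2 : (τ + ((n + 1 : ℕ) : ℤ) - τ).toNat = n + 1 := by push_cast; omega
    rw [h1, h2, sol_shift]
  exact closure_mono key (hx (s + 1))
end

section
/- Let (X,d) be a complete metric space, I a discrete interval unbounded above, U ⊆ X closed, F_t : U → U continuous (t ∈ I), and let F : U → U be continuous defining the autonomous limit equation (Δ∞) u_{t+1} = F(u_t). Suppose (Δ∞) has a bounded absorbing set A ⊆ U (for every bounded B ⊆ U there is S ∈ ℕ with F^s(B) ⊆ A for all s ≥ S) and a global attractor A* ⊆ A, i.e. A* is the maximal nonempty, compact, invariant (F(A*) = A*) set attracting all bounded subsets of U: lim_{s→∞} dist(F^s(B), A*) = 0 for every bounded B ⊆ U. If 𝓐 := I×A is a forward absorbing set of (Δ) u_{t+1} = F_t(u_t) and lim_{s→∞} sup_{a∈A} d(φ(τ+s;τ,a),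 F^s(a)) = 0 for all τ ∈ I, then Ω_𝓐(τ) = A* for all τ ∈ I; in particular ω_𝓐^− = ω_𝓐^+ = A*. -/
open Filter Topology Metric Bornology

lemma iterate_surjOn_of_image_eq {X : Type*} (F : X → X) (S : Set X)
    (h : F '' S = S) : ∀ n : ℕ, ∀ x ∈ S, ∃ a ∈ S, F^[n] a = x := by
  intro n
  induction n with
  | zero => exact fun x hx => ⟨x, hx, rfl⟩
  | succ n ih =>
    intro x hx
    rw [← h] at hx
    obtain ⟨y, hy, rfl⟩ := hx
    obtain ⟨a, ha, rfl⟩ := ih y hy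
    exact ⟨a, ha, Function.iterate_succ_apply' F n a⟩

/-- asymptotically autonomous difference equations — the forward
limit fibres all coincide with the global attractor of the limit equation
(Theorem 5 of the paper). -/
theorem asymptotically_autonomous_limit_sets
    {X : Type*} [MetricSpace X] [CompleteSpace X]
    -- discrete interval I, unbounded above
    (I : Set ℤ) (hI : ∀ ⦃a b c : ℤ⦄, a ∈ I → c ∈ I → a ≤ b → b ≤ c → b ∈ I)
    (hIub : ∀ t : ℤ, ∃ s ∈ I, t ≤ s)
    -- closed state space U, nonautonomous right-hand sides F_t and autonomous limit F
    (U : Set X) (hUcl : IsClosed U)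
    (Ft : ℤ → X → X)
    (hFtc : ∀ t ∈ I, ContinuousOn (Ft t) U)
    (hFtmap : ∀ t ∈ I, ∀ u ∈ U, Ft t u ∈ U)
    (F : X → X) (hFc : ContinuousOn F U) (hFmap : ∀ u ∈ U, F u ∈ U)
    -- bounded absorbing set A of the limit equation (Δ∞)
    (A : Set X) (hAU : A ⊆ U) (hAbd : IsBounded A)
    (habs : ∀ B ⊆ U, IsBounded B → ∃ S : ℕ, ∀ s : ℕ, S ≤ s → F^[s] '' B ⊆ A)
    -- global attractor A* ⊆ A of (Δ∞)
    (Astar : Set X) (hAstarA : Astar ⊆ A) (hAstarne : Astar.Nonempty)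
    (hAstarcpt : IsCompact Astar) (hAstarinv : F '' Astar = Astar)
    (hAstarattr : ∀ B ⊆ U, IsBounded B →
      Tendsto (fun s : ℕ => semidist (F^[s] '' B) Astar) atTop (𝓝 0))
    (hAstarmax : ∀ C : Set X, C ⊆ U → C.Nonempty → IsCompact C → F '' C = C → C ⊆ Astar)
    -- 𝓐 := I × A is forward absorbing for (Δ)
    (hfab : ∀ τ ∈ I, ∀ B : ℤ → Set X, (∀ t ∈ I, B t ⊆ U) →
      (∃ C : Set X, IsBounded C ∧ ∀ t ∈ I, B t ⊆ C) →
      ∃ S : ℕ, ∀ s : ℕ, S ≤ s → phi Ft (τ + (s : ℤ)) τ '' B τ ⊆ A)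
    -- asymptotic autonomy: uniform convergence of the process to the semigroup on A
    (hcond : ∀ τ ∈ I,
      Tendsto (fun s : ℕ =>
          sSup ((fun a => dist (phi Ft (τ + (s : ℤ)) τ a) (F^[s] a)) '' A))
        atTop (𝓝 0))
    -- the forward limit fibres of 𝓐 = I × A
    (Om : ℤ → Set X)
    (hOm : ∀ τ : ℤ, Om τ =
      ⋂ s : ℕ, closure (⋃ t : ℕ, ⋃ (_ : s ≤ t), phi Ft (τ + (t : ℤ)) τ '' A)) :
    (∀ τ ∈ I, Om τ = Astar) ∧
    (⋂ τ ∈ I, Om τ) = Astar ∧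
    closure (⋃ τ ∈ I, Om τ) = Astar := by
  obtain ⟨τ0, hτ0, _⟩ := hIub 0
  have hAne : A.Nonempty := hAstarne.mono hAstarA
  obtain ⟨a0, ha0⟩ := id hAstarne
  obtain ⟨C, hC⟩ := Metric.isBounded_iff.1 hAbd
  obtain ⟨S1, hS1⟩ := habs A hAU hAbd
  have hclosed : IsClosed Astar := hAstarcpt.isClosed
  have main : ∀ τ ∈ I, Om τ = Astar := by
    intro τ hτ
    obtain ⟨S2, hS2⟩ := hfab τ hτ (fun _ => A) (fun t _ => hAU)
      ⟨A, hAbd, fun t _ => subset_rfl⟩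
    -- boundedness of the deviation set for large s
    have hbdd : ∀ s : ℕ, S1 ≤ s → S2 ≤ s →
        ((fun a => dist (phi Ft (τ + (s : ℤ)) τ a) (F^[s] a)) '' A) ⊆ Set.Iic C := by
      intro s hs1 hs2 d hd
      obtain ⟨a, haA, rfl⟩ := hd
      have h1 : phi Ft (τ + (s : ℤ)) τ a ∈ A := hS2 s hs2 ⟨a, haA, rfl⟩
      have h2 : F^[s] a ∈ A := hS1 s hs1 ⟨a, haA, rfl⟩
      exact hC h1 h2
    have hbddsemi : ∀ s : ℕ, S1 ≤ s →
        ((fun y => Metric.infDist y Astar) '' (F^[s] '' A)) ⊆ Set.Iic C := by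
      intro s hs1 d hd
      obtain ⟨y, hy, rfl⟩ := hd
      have hyA : y ∈ A := hS1 s hs1 hy
      exact le_trans (Metric.infDist_le_dist_of_mem ha0) (hC hyA (hAstarA ha0))
    rw [hOm]
    apply subset_antisymm
    · -- Om τ ⊆ Astar
      intro x hx
      have key : ∀ ε : ℝ, 0 < ε → Metric.infDist x Astar < ε := by
        intro ε hε
        have hε3 : 0 < ε / 3 := by linarith
        obtain ⟨N1, hN1⟩ := Filter.eventually_atTop.1
          ((hcond τ hτ).eventually (gt_mem_nhds hε3))
        obtain ⟨N2, hN2⟩ := Filter.eventually_atTop.1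
          ((hAstarattr A hAU hAbd).eventually (gt_mem_nhds hε3))
        set s0 := max (max N1 N2) (max S1 S2) with hs0
        have hx0 := Set.mem_iInter.1 hx s0
        obtain ⟨y, hy, hxy⟩ := Metric.mem_closure_iff.1 hx0 (ε / 3) hε3
        obtain ⟨t, ht⟩ := Set.mem_iUnion.1 hy
        obtain ⟨hts, ht2⟩ := Set.mem_iUnion.1 ht
        obtain ⟨a, haA, rfl⟩ := ht2
        have htS1 : S1 ≤ t := le_trans (le_trans (le_max_left _ _) (le_max_right _ _)) hts
        have htS2 : S2 ≤ t := le_trans (le_trans (le_max_right _ _) (le_max_right _ _)) hts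
        have htN1 : N1 ≤ t := le_trans (le_trans (le_max_left _ _) (le_max_left _ _)) hts
        have htN2 : N2 ≤ t := le_trans (le_trans (le_max_right _ _) (le_max_left _ _)) hts
        have hd1 : dist (phi Ft (τ + (t : ℤ)) τ a) (F^[t] a) < ε / 3 := by
          have hle : dist (phi Ft (τ + (t : ℤ)) τ a) (F^[t] a) ≤
              sSup ((fun a => dist (phi Ft (τ + (t : ℤ)) τ a) (F^[t] a)) '' A) :=
            le_csSup ⟨C, fun d hd => hbdd t htS1 htS2 hd⟩ ⟨a, haA, rfl⟩
          exact lt_of_le_of_lt hle (hN1 t htN1)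
        have hd2 : Metric.infDist (F^[t] a) Astar < ε / 3 := by
          have hle : Metric.infDist (F^[t] a) Astar ≤ semidist (F^[t] '' A) Astar :=
            le_csSup ⟨C, fun d hd => hbddsemi t htS1 hd⟩ ⟨F^[t] a, ⟨a, haA, rfl⟩, rfl⟩
          exact lt_of_le_of_lt hle (hN2 t htN2)
        calc Metric.infDist x Astar
            ≤ Metric.infDist (phi Ft (τ + (t : ℤ)) τ a) Astar +
              dist x (phi Ft (τ + (t : ℤ)) τ a) :=
              Metric.infDist_le_infDist_add_dist
          _ ≤ (Metric.infDist (F^[t] a) Astar +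
              dist (phi Ft (τ + (t : ℤ)) τ a) (F^[t] a)) +
              dist x (phi Ft (τ + (t : ℤ)) τ a) := by
              gcongr
              exact Metric.infDist_le_infDist_add_dist
          _ < (ε / 3 + ε / 3) + ε / 3 :=
              add_lt_add (add_lt_add hd2 hd1) hxy
          _ = ε := by ring
      have h0 : Metric.infDist x Astar = 0 := by
        by_contra h
        have hpos : 0 < Metric.infDist x Astar :=
          lt_of_le_of_ne Metric.infDist_nonneg (Ne.symm h)
        exact lt_irrefl _ (key _ hpos)
      exact (hclosed.mem_iff_infDist_zero hAstarne).2 h0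
    · -- Astar ⊆ Om τ
      intro x hx
      refine Set.mem_iInter.2 fun s => ?_
      rw [Metric.mem_closure_iff]
      intro ε hε
      obtain ⟨N1, hN1⟩ := Filter.eventually_atTop.1
        ((hcond τ hτ).eventually (gt_mem_nhds hε))
      set t := max (max s N1) (max S1 S2) with ht
      have hts : s ≤ t := le_trans (le_max_left _ _) (le_max_left _ _)
      have htN1 : N1 ≤ t := le_trans (le_max_right _ _) (le_max_left _ _)
      have htS1 : S1 ≤ t := le_trans (le_max_left _ _) (le_max_right _ _)
      have htS2 : S2 ≤ t := le_trans (le_max_right _ _) (le_max_right _ _)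
      obtain ⟨a, haS, hax⟩ := iterate_surjOn_of_image_eq F Astar hAstarinv t x hx
      refine ⟨phi Ft (τ + (t : ℤ)) τ a, ?_, ?_⟩
      · exact Set.mem_iUnion.2 ⟨t, Set.mem_iUnion.2 ⟨hts, ⟨a, hAstarA haS, rfl⟩⟩⟩
      · have hle : dist (phi Ft (τ + (t : ℤ)) τ a) (F^[t] a) ≤
            sSup ((fun a => dist (phi Ft (τ + (t : ℤ)) τ a) (F^[t] a)) '' A) :=
          le_csSup ⟨C, fun d hd => hbdd t htS1 htS2 hd⟩ ⟨a, hAstarA haS, rfl⟩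
        have := lt_of_le_of_lt hle (hN1 t htN1)
        rw [hax] at this
        rwa [dist_comm]
  refine ⟨main, ?_, ?_⟩
  · apply subset_antisymm
    · intro x hx
      have := Set.mem_iInter₂.1 hx τ0 hτ0
      rwa [main τ0 hτ0] at this
    · intro x hx
      exact Set.mem_iInter₂.2 fun τ hτ => (main τ hτ).symm ▸ hx
  · have hU : (⋃ τ ∈ I, Om τ) = Astar := by
      apply subset_antisymm
      · intro x hx
        obtain ⟨τ, hτ, hxτ⟩ := Set.mem_iUnion₂.1 hx
        rwa [main τ hτ] at hxτ
      · intro x hx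
        exact Set.mem_iUnion₂.2 ⟨τ0, hτ0, (main τ0 hτ0).symm ▸ hx⟩
    rw [hU, hclosed.closure_eq]
end

section
/- Let X be a Banach space, I a discrete interval unbounded above, U ⊆ X closed, and let F_t = L_t + N_t : U → U be semilinear with transition operator Φ of (L_t) satisfying ‖Φ(t,s)‖ ≤ K·α^{t−s} for all s ≤ t, where K ≥ 1, α ∈ (0,1), and with ‖N_t(u) − N_t(ū)‖ ≤ L·‖u − ū‖ for all t ∈ I and u, ū ∈ U, where L ∈ (0, (1−α)/K). Let 𝓛 ∈ L(X) and N : U → X be such that F(u) := 𝓛u + N(u) maps U into U, and assume: (i) there is K₁ ≥ 0 with ‖L_t − 𝓛‖ ≤ K₁·α^t for all t ∈ I; (ii) for every r > 0 there is K₂(r) ≥ 1 with sup_{u ∈ U, ‖u‖≤r} ‖N_t(u) − N(u)‖ ≤ K₂(r)·α^t for all t ∈ I. Then for every bounded A ⊆ U and every τ ∈ I the convergence sup_{a∈A} ‖φ(τ+t;τ,a) − F^t(a)‖ → 0 as t → ∞ holds even exponentially: there is a constant C ≥ 0 (depending on A and τ) with sup_{a∈A} ‖φ(τ+t;τ,a)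 − F^t(a)‖ ≤ C·(α + K L)^t for all t ∈ ℕ₀. -/
open Filter Topology Metric Bornology

/-- Transition operator: `transOp L s n = Φ(s+n, s) = L_{s+n-1} ⋯ L_s`. -/
def transOp {X : Type*} [NormedAddCommGroup X] [NormedSpace ℝ X]
    (L : ℤ → X →L[ℝ] X) (s : ℤ) : ℕ → (X →L[ℝ] X)
  | 0 => ContinuousLinearMap.id ℝ X
  | n + 1 => (L (s + (n : ℤ))).comp (transOp L s n)

lemma aas_le_of_forall_le_add_pow {α c b D : ℝ} (hα0 : 0 ≤ α) (hα1 : α < 1)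
    (h : ∀ n : ℕ, c ≤ b + D * α ^ n) : c ≤ b := by
  have hT : Tendsto (fun n : ℕ => b + D * α ^ n) atTop (𝓝 (b + D * 0)) :=
    tendsto_const_nhds.add
      (tendsto_const_nhds.mul (tendsto_pow_atTop_nhds_zero_of_lt_one hα0 hα1))
  simpa using ge_of_tendsto hT (Filter.Eventually.of_forall h)

lemma aas_voc {X : Type*} [NormedAddCommGroup X] [NormedSpace ℝ X]
    (L : ℤ → X →L[ℝ] X) (σ : ℤ) (u g : ℕ → X)
    (h : ∀ n : ℕ, u (n + 1) = L (σ + (n : ℤ)) (u n) + g n) :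
    ∀ n : ℕ, u n = transOp L σ n (u 0)
      + ∑ s ∈ Finset.range n, transOp L (σ + (s : ℤ) + 1) (n - 1 - s) (g s) := by
  intro n
  induction n with
  | zero => simp [transOp]
  | succ n ih =>
      rw [h n, ih, map_add, map_sum, Finset.sum_range_succ]
      have h1 : ∀ v : X, L (σ + (n : ℤ)) (transOp L σ n v) = transOp L σ (n + 1) v := by
        intro v; rfl
      have h2 : ∀ s ∈ Finset.range n, ∀ v : X,
          L (σ + (n : ℤ)) (transOp L (σ + (s : ℤ) + 1) (n - 1 - s) v)
            = transOp L (σ + (s : ℤ) + 1) (n + 1 - 1 - s) v := by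
        intro s hs v
        rw [Finset.mem_range] at hs
        have he : n + 1 - 1 - s = (n - 1 - s) + 1 := by omega
        rw [he]
        show L (σ + (n : ℤ)) (transOp L (σ + (s : ℤ) + 1) (n - 1 - s) v)
          = L (σ + (s : ℤ) + 1 + ((n - 1 - s : ℕ) : ℤ)) (transOp L (σ + (s : ℤ) + 1) (n - 1 - s) v)
        congr 2
        have : ((n - 1 - s : ℕ) : ℤ) = (n : ℤ) - 1 - s := by omega
        rw [this]; ring
      rw [h1]
      have h3 : (∑ s ∈ Finset.range n,
            L (σ + (n : ℤ)) (transOp L (σ + (s : ℤ) + 1) (n - 1 - s) (g s)))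
          = ∑ s ∈ Finset.range n, transOp L (σ + (s : ℤ) + 1) (n + 1 - 1 - s) (g s) :=
        Finset.sum_congr rfl fun s hs => h2 s hs (g s)
      rw [h3]
      have h4 : transOp L (σ + (n : ℤ) + 1) (n + 1 - 1 - n) (g n) = g n := by
        have : n + 1 - 1 - n = 0 := by omega
        rw [this]; rfl
      rw [h4]; abel

lemma aas_transOp_const {X : Type*} [NormedAddCommGroup X] [NormedSpace ℝ X]
    (T : X →L[ℝ] X) (σ : ℤ) : ∀ n : ℕ, transOp (fun _ => T) σ n = T ^ n := by
  intro n
  induction n with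
  | zero => rfl
  | succ n ih => rw [pow_succ']; show T.comp (transOp (fun _ => T) σ n) = _; rw [ih]; rfl

lemma aas_geom_sum_le {α : ℝ} (hα0 : 0 ≤ α) (hα1 : α < 1) (t : ℕ) :
    ∑ s ∈ Finset.range t, α ^ (t - 1 - s) ≤ 1 / (1 - α) := by
  rw [Finset.sum_range_reflect (fun j => α ^ j) t]
  have h2 : (0:ℝ) < 1 - α := by linarith
  rw [geom_sum_eq (by linarith : α ≠ 1)]
  have heq : (α ^ t - 1) / (α - 1) = (1 - α ^ t) / (1 - α) := by
    rw [← neg_div_neg_eq]; congr 1 <;> ring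
  rw [heq]
  gcongr
  linarith [pow_nonneg hα0 t]

lemma aas_gronwall_bound {α β c0 M R : ℝ} (hα0 : 0 < α) (hα1 : α < 1)
    (hβ : 0 ≤ β) (hM : 0 ≤ M) (hR0 : 0 ≤ R)
    (hR : c0 + (β * R + M) * (1 / (1 - α)) ≤ R)
    (d : ℕ → ℝ)
    (hd : ∀ t, d t ≤ c0 + ∑ s ∈ Finset.range t, α ^ (t - 1 - s) * (β * d s + M)) :
    ∀ t, d t ≤ R := by
  intro t
  induction t using Nat.strong_induction_on with
  | _ t ih =>
    calc d t ≤ c0 + ∑ s ∈ Finset.range t, α ^ (t - 1 - s) * (β * d s + M) := hd t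
      _ ≤ c0 + ∑ s ∈ Finset.range t, α ^ (t - 1 - s) * (β * R + M) := by
          have : ∀ s ∈ Finset.range t,
              α ^ (t - 1 - s) * (β * d s + M) ≤ α ^ (t - 1 - s) * (β * R + M) := by
            intro s hs
            rw [Finset.mem_range] at hs
            have h7 : β * d s + M ≤ β * R + M := by
              nlinarith [ih s hs]
            exact mul_le_mul_of_nonneg_left h7 (pow_nonneg hα0.le _)
          linarith [Finset.sum_le_sum this]
      _ = c0 + (∑ s ∈ Finset.range t, α ^ (t - 1 - s)) * (β * R + M) := by
          rw [Finset.sum_mul]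
      _ ≤ c0 + (1 / (1 - α)) * (β * R + M) := by
          have h5 := aas_geom_sum_le hα0.le hα1 t
          have h6 : 0 ≤ β * R + M := by positivity
          nlinarith
      _ ≤ R := by linarith [hR]

lemma aas_gronwall_exp {α β G : ℝ} (hα0 : 0 < α) (hβ : 0 < β) (hG : 0 ≤ G)
    (d : ℕ → ℝ)
    (hd : ∀ t, d t ≤ ∑ s ∈ Finset.range t, α ^ (t - 1 - s) * (β * d s + G * α ^ s)) :
    ∀ t, d t ≤ (G / β) * ((α + β) ^ t - α ^ t) := by
  intro t
  induction t using Nat.strong_induction_on with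
  | _ t ih =>
    have key : ∀ s ∈ Finset.range t,
        α ^ (t - 1 - s) * (β * d s + G * α ^ s) ≤ G * ((α + β) ^ s * α ^ (t - 1 - s)) := by
      intro s hs
      rw [Finset.mem_range] at hs
      have h1 := ih s hs
      have h2 : β * d s + G * α ^ s ≤ G * (α + β) ^ s := by
        have : β * d s ≤ G * ((α + β) ^ s - α ^ s) := by
          have := mul_le_mul_of_nonneg_left h1 hβ.le
          calc β * d s ≤ β * ((G / β) * ((α + β) ^ s - α ^ s)) := this
            _ = G * ((α + β) ^ s - α ^ s) := by field_simp
        linarith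
      nlinarith [pow_nonneg hα0.le (t - 1 - s)]
    calc d t ≤ ∑ s ∈ Finset.range t, α ^ (t - 1 - s) * (β * d s + G * α ^ s) := hd t
      _ ≤ ∑ s ∈ Finset.range t, G * ((α + β) ^ s * α ^ (t - 1 - s)) := Finset.sum_le_sum key
      _ = G * ((∑ s ∈ Finset.range t, (α + β) ^ s * α ^ (t - 1 - s))) := by
          rw [Finset.mul_sum]
      _ = (G / β) * ((α + β) ^ t - α ^ t) := by
          have h := geom_sum₂_mul (α + β) α t
          have hb : (α + β) - α = β := by ring
          rw [hb] at h
          field_simp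
          nlinarith [h]

set_option maxHeartbeats 1000000 in
/-- asymptotically autonomous semilinear difference equations —
exponential convergence of the process to the limit semigroup (Theorem 7). -/
theorem asymptotically_autonomous_semilinear
    {X : Type*} [NormedAddCommGroup X] [NormedSpace ℝ X] [CompleteSpace X]
    -- discrete interval I, unbounded above
    (I : Set ℤ) (hI : ∀ ⦃a b c : ℤ⦄, a ∈ I → c ∈ I → a ≤ b → b ≤ c → b ∈ I)
    (hIub : ∀ t : ℤ, ∃ s ∈ I, t ≤ s)
    -- closed state space U and semilinear right-hand sides F_t = L_t + N_t : U → U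
    (U : Set X) (hUcl : IsClosed U)
    (L : ℤ → X →L[ℝ] X) (N : ℤ → X → X)
    (Ft : ℤ → X → X)
    (hFt : ∀ t ∈ I, ∀ u ∈ U, Ft t u = L t u + N t u)
    (hFtmap : ∀ t ∈ I, ∀ u ∈ U, Ft t u ∈ U)
    -- uniform exponential bound on the transition operator
    (K : ℝ) (hK : 1 ≤ K) (α : ℝ) (hα0 : 0 < α) (hα1 : α < 1)
    (hΦ : ∀ s t : ℤ, s ∈ I → t ∈ I → s ≤ t →
      ‖transOp L s (t - s).toNat‖ ≤ K * α ^ (t - s).toNat)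
    -- global Lipschitz condition on the nonlinearities
    (Lc : ℝ) (hLc0 : 0 < Lc) (hLc : Lc < (1 - α) / K)
    (hNlip : ∀ t ∈ I, ∀ u ∈ U, ∀ v ∈ U, ‖N t u - N t v‖ ≤ Lc * ‖u - v‖)
    -- autonomous limit equation F = 𝓛 + N∞ : U → U
    (Linf : X →L[ℝ] X) (Ninf : X → X) (F : X → X)
    (hF : ∀ u ∈ U, F u = Linf u + Ninf u)
    (hFmap : ∀ u ∈ U, F u ∈ U)
    -- (i) exponential convergence of the linear parts
    (K₁ : ℝ) (hK₁0 : 0 ≤ K₁)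
    (hLconv : ∀ t ∈ I, ‖L t - Linf‖ ≤ K₁ * α ^ t)
    -- (ii) exponential convergence of the nonlinearities on bounded sets
    (hNconv : ∀ r : ℝ, 0 < r → ∃ K₂ : ℝ, 1 ≤ K₂ ∧
      ∀ t ∈ I, ∀ u ∈ U, ‖u‖ ≤ r → ‖N t u - Ninf u‖ ≤ K₂ * α ^ t) :
    -- conclusion: exponential convergence φ(τ+t;τ,a) → F^t(a), uniformly on bounded sets
    ∀ A : Set X, A ⊆ U → IsBounded A → ∀ τ ∈ I,
      ∃ C : ℝ, 0 ≤ C ∧ ∀ t : ℕ, ∀ a ∈ A,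
        ‖phi Ft (τ + (t : ℤ)) τ a - F^[t] a‖ ≤ C * (α + K * Lc) ^ t := by
  intro A hAU hAbd τ hτI
  rcases A.eq_empty_or_nonempty with rfl | ⟨a₀, ha₀⟩
  · exact ⟨0, le_rfl, by simp⟩
  have hK0 : (0:ℝ) < K := lt_of_lt_of_le one_pos hK
  have hβ : (0:ℝ) < K * Lc := mul_pos hK0 hLc0
  have hβlt : K * Lc < 1 - α := by
    have h := (lt_div_iff₀ hK0).mp hLc
    nlinarith
  -- membership helper
  have hmemI : ∀ s : ℤ, s ∈ I → ∀ t : ℤ, s ≤ t → t ∈ I := by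
    intro s hs t hst
    obtain ⟨c, hc, htc⟩ := hIub t
    exact hI hs hc hst htc
  -- sequence going to +∞ in I
  choose σ hσI hσge using hIub
  have hzpow : ∀ n : ℕ, α ^ σ (n : ℤ) ≤ α ^ n := by
    intro n
    calc α ^ σ (n : ℤ) ≤ α ^ ((n : ℕ) : ℤ) :=
          zpow_le_zpow_right_of_le_one₀ hα0 hα1.le (hσge _)
      _ = α ^ n := zpow_natCast α n
  have hzpos : ∀ m : ℤ, (0:ℝ) < α ^ m := fun m => zpow_pos hα0 m
  -- uniform transition operator bound, convenient form
  have hΦ' : ∀ s : ℤ, s ∈ I → ∀ k : ℕ, ‖transOp L s k‖ ≤ K * α ^ k := by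
    intro s hs k
    have hle : s ≤ s + (k : ℤ) := by omega
    have h := hΦ s (s + (k : ℤ)) hs (hmemI s hs _ hle) hle
    have hk : (s + (k : ℤ) - s).toNat = k := by omega
    rwa [hk] at h
  -- crude power bound
  have hLinfNormPow : ∀ (s : ℕ) (x : X), ‖(Linf ^ s) x‖ ≤ ‖Linf‖ ^ s * ‖x‖ := by
    intro s
    induction s with
    | zero => intro x; simp
    | succ s ih =>
        intro x
        rw [pow_succ']
        calc ‖(Linf * Linf ^ s) x‖ = ‖Linf ((Linf ^ s) x)‖ := rfl
          _ ≤ ‖Linf‖ * ‖(Linf ^ s) x‖ := Linf.le_opNorm _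
          _ ≤ ‖Linf‖ * (‖Linf‖ ^ s * ‖x‖) :=
              mul_le_mul_of_nonneg_left (ih x) (norm_nonneg _)
          _ = ‖Linf‖ ^ (s + 1) * ‖x‖ := by rw [pow_succ']; ring
  -- sharp power bound for the limit operator
  have hLinfPow : ∀ (n : ℕ) (x : X), ‖(Linf ^ n) x‖ ≤ K * α ^ n * ‖x‖ := by
    intro n x
    have hD0 : (0:ℝ) ≤ ∑ s ∈ Finset.range n,
        K * α ^ (n - 1 - s) * (K₁ * α ^ s * (‖Linf‖ ^ s * ‖x‖)) :=
      Finset.sum_nonneg fun s _ => by positivity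
    apply aas_le_of_forall_le_add_pow hα0.le hα1
      (D := ∑ s ∈ Finset.range n, K * α ^ (n - 1 - s) * (K₁ * α ^ s * (‖Linf‖ ^ s * ‖x‖)))
    intro m
    have hσmI : σ (m : ℤ) ∈ I := hσI _
    have hrec : ∀ s : ℕ, (Linf ^ (s + 1)) x
        = L (σ (m : ℤ) + (s : ℤ)) ((Linf ^ s) x)
          + (Linf - L (σ (m : ℤ) + (s : ℤ))) ((Linf ^ s) x) := by
      intro s
      rw [pow_succ', ContinuousLinearMap.mul_apply, ContinuousLinearMap.sub_apply]
      abel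
    have hvoc := aas_voc L (σ (m : ℤ)) (fun s => (Linf ^ s) x)
      (fun s => (Linf - L (σ (m : ℤ) + (s : ℤ))) ((Linf ^ s) x)) hrec n
    simp only [pow_zero, ContinuousLinearMap.one_apply] at hvoc
    have hterm : ∀ s ∈ Finset.range n,
        ‖transOp L (σ (m : ℤ) + (s : ℤ) + 1) (n - 1 - s)
          ((Linf - L (σ (m : ℤ) + (s : ℤ))) ((Linf ^ s) x))‖
        ≤ (K * α ^ (n - 1 - s) * (K₁ * α ^ s * (‖Linf‖ ^ s * ‖x‖))) * α ^ (m : ℕ) := by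
      intro s hs
      have hsI : σ (m : ℤ) + (s : ℤ) ∈ I := hmemI _ hσmI _ (by omega)
      have hs1I : σ (m : ℤ) + (s : ℤ) + 1 ∈ I := hmemI _ hσmI _ (by omega)
      have hop := hΦ' _ hs1I (n - 1 - s)
      have hg : ‖(Linf - L (σ (m : ℤ) + (s : ℤ))) ((Linf ^ s) x)‖
          ≤ K₁ * α ^ (σ (m : ℤ) + (s : ℤ)) * (‖Linf‖ ^ s * ‖x‖) := by
        calc ‖(Linf - L (σ (m : ℤ) + (s : ℤ))) ((Linf ^ s) x)‖
            ≤ ‖Linf - L (σ (m : ℤ) + (s : ℤ))‖ * ‖(Linf ^ s) x‖ :=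
              ContinuousLinearMap.le_opNorm _ _
          _ ≤ (K₁ * α ^ (σ (m : ℤ) + (s : ℤ))) * (‖Linf‖ ^ s * ‖x‖) := by
              apply mul_le_mul _ (hLinfNormPow s x) (norm_nonneg _) (by positivity)
              rw [norm_sub_rev]
              exact hLconv _ hsI
      calc ‖transOp L (σ (m : ℤ) + (s : ℤ) + 1) (n - 1 - s)
            ((Linf - L (σ (m : ℤ) + (s : ℤ))) ((Linf ^ s) x))‖
          ≤ ‖transOp L (σ (m : ℤ) + (s : ℤ) + 1) (n - 1 - s)‖
            * ‖(Linf - L (σ (m : ℤ) + (s : ℤ))) ((Linf ^ s) x)‖ :=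
            ContinuousLinearMap.le_opNorm _ _
        _ ≤ (K * α ^ (n - 1 - s)) * (K₁ * α ^ (σ (m : ℤ) + (s : ℤ)) * (‖Linf‖ ^ s * ‖x‖)) :=
            mul_le_mul hop hg (norm_nonneg _) (by positivity)
        _ = (K * α ^ (n - 1 - s) * (K₁ * α ^ s * (‖Linf‖ ^ s * ‖x‖))) * α ^ σ (m : ℤ) := by
            rw [zpow_add₀ (ne_of_gt hα0), zpow_natCast]
            ring
        _ ≤ (K * α ^ (n - 1 - s) * (K₁ * α ^ s * (‖Linf‖ ^ s * ‖x‖))) * α ^ (m : ℕ) :=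
            mul_le_mul_of_nonneg_left (hzpow m) (by positivity)
    calc ‖(Linf ^ n) x‖
        ≤ ‖transOp L (σ (m : ℤ)) n x‖
          + ‖∑ s ∈ Finset.range n, transOp L (σ (m : ℤ) + (s : ℤ) + 1) (n - 1 - s)
              ((Linf - L (σ (m : ℤ) + (s : ℤ))) ((Linf ^ s) x))‖ := by
          rw [hvoc]; exact norm_add_le _ _
      _ ≤ K * α ^ n * ‖x‖
          + ∑ s ∈ Finset.range n,
              (K * α ^ (n - 1 - s) * (K₁ * α ^ s * (‖Linf‖ ^ s * ‖x‖))) * α ^ (m : ℕ) := by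
          gcongr
          · calc ‖transOp L (σ (m : ℤ)) n x‖ ≤ ‖transOp L (σ (m : ℤ)) n‖ * ‖x‖ :=
                ContinuousLinearMap.le_opNorm _ _
              _ ≤ K * α ^ n * ‖x‖ :=
                mul_le_mul_of_nonneg_right (hΦ' _ hσmI n) (norm_nonneg _)
          · exact norm_sum_le_of_le _ hterm
      _ = K * α ^ n * ‖x‖
          + (∑ s ∈ Finset.range n, K * α ^ (n - 1 - s) * (K₁ * α ^ s * (‖Linf‖ ^ s * ‖x‖)))
            * α ^ (m : ℕ) := by rw [Finset.sum_mul]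
  -- Lipschitz bound for the limit nonlinearity
  have hNinfLip : ∀ u ∈ U, ∀ v ∈ U, ‖Ninf u - Ninf v‖ ≤ Lc * ‖u - v‖ := by
    intro u hu v hv
    have hr : (0:ℝ) < max ‖u‖ ‖v‖ + 1 := by positivity
    obtain ⟨K₂, hK₂1, hK₂⟩ := hNconv _ hr
    apply aas_le_of_forall_le_add_pow hα0.le hα1 (D := 2 * K₂)
    intro m
    have h1 := hK₂ _ (hσI (m : ℤ)) u hu
      (by linarith [le_max_left ‖u‖ ‖v‖])
    have h2 := hK₂ _ (hσI (m : ℤ)) v hv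
      (by linarith [le_max_right ‖u‖ ‖v‖])
    have h3 := hNlip _ (hσI (m : ℤ)) u hu v hv
    have h4 := hzpow m
    have hsc : K₂ * α ^ σ (m : ℤ) ≤ K₂ * α ^ (m : ℕ) :=
      mul_le_mul_of_nonneg_left h4 (by linarith)
    calc ‖Ninf u - Ninf v‖
        = ‖(Ninf u - N (σ (m : ℤ)) u) + (N (σ (m : ℤ)) u - N (σ (m : ℤ)) v)
            + (N (σ (m : ℤ)) v - Ninf v)‖ := by abel_nf
      _ ≤ ‖Ninf u - N (σ (m : ℤ)) u‖ + ‖N (σ (m : ℤ)) u - N (σ (m : ℤ)) v‖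
            + ‖N (σ (m : ℤ)) v - Ninf v‖ := norm_add₃_le
      _ ≤ K₂ * α ^ σ (m : ℤ) + Lc * ‖u - v‖ + K₂ * α ^ σ (m : ℤ) := by
          rw [norm_sub_rev (Ninf u)]
          gcongr
      _ ≤ Lc * ‖u - v‖ + 2 * K₂ * α ^ (m : ℕ) := by nlinarith
  -- constants
  obtain ⟨rA, hrA⟩ := hAbd.exists_norm_le
  have hrA0 : 0 ≤ rA := le_trans (norm_nonneg a₀) (hrA a₀ ha₀)
  have hNa₀ : (0:ℝ) ≤ ‖Ninf a₀‖ := norm_nonneg _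
  set M₀ : ℝ := Lc * rA + ‖Ninf a₀‖ with hM₀def
  have hM₀0 : 0 ≤ M₀ := by positivity
  have h1αβ : 0 < 1 - α - K * Lc := by linarith
  set R : ℝ := (K * rA * (1 - α) + K * M₀) / (1 - α - K * Lc) with hRdef
  have hR0 : 0 ≤ R := by
    rw [hRdef]
    apply div_nonneg _ h1αβ.le
    exact add_nonneg (mul_nonneg (mul_nonneg hK0.le hrA0) (by linarith))
      (mul_nonneg hK0.le hM₀0)
  have hRineq : K * rA + (K * Lc * R + K * M₀) * (1 / (1 - α)) ≤ R := by
    have h1α : (0:ℝ) < 1 - α := by linarith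
    have key : K * rA + (K * Lc * R + K * M₀) * (1 / (1 - α)) = R := by
      rw [hRdef]
      field_simp
      ring
    exact le_of_eq key
  set r : ℝ := max R 1 with hrdef
  have hr1 : (1:ℝ) ≤ r := le_max_right _ _
  have hr0 : (0:ℝ) < r := lt_of_lt_of_le one_pos hr1
  obtain ⟨K₂, hK₂1, hK₂⟩ := hNconv r hr0
  have hατ : (0:ℝ) < α ^ τ := hzpos τ
  set E : ℝ := (K₁ * r + K₂) * α ^ τ with hEdef
  have hE0 : 0 ≤ E := by positivity
  refine ⟨K * E / (K * Lc), by positivity, ?_⟩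
  intro t a ha
  -- iterates
  set x : ℕ → X := sol Ft τ a with hxdef
  set y : ℕ → X := fun n => F^[n] a with hydef
  have hτn : ∀ n : ℕ, τ + (n : ℤ) ∈ I := fun n => hmemI τ hτI _ (by omega)
  have hτn1 : ∀ n : ℕ, τ + (n : ℤ) + 1 ∈ I := fun n => hmemI τ hτI _ (by omega)
  have hxU : ∀ n, x n ∈ U := by
    intro n
    induction n with
    | zero => exact hAU ha
    | succ n ih => exact hFtmap _ (hτn n) _ ih
  have hyU : ∀ n, y n ∈ U := by
    intro n
    induction n with
    | zero => exact hAU ha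
    | succ n ih =>
        have : y (n + 1) = F (y n) := Function.iterate_succ_apply' F n a
        rw [this]
        exact hFmap _ ih
  have hyrec : ∀ n, y (n + 1) = Linf (y n) + Ninf (y n) := by
    intro n
    have h1 : y (n + 1) = F (y n) := Function.iterate_succ_apply' F n a
    rw [h1, hF _ (hyU n)]
  have hxrec : ∀ n, x (n + 1) = L (τ + (n : ℤ)) (x n) + N (τ + (n : ℤ)) (x n) := by
    intro n
    have h1 : x (n + 1) = Ft (τ + (n : ℤ)) (x n) := rfl
    rw [h1, hFt _ (hτn n) _ (hxU n)]
  -- uniform bound on the autonomous iterates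
  have hz : ∀ n, ‖y n‖ ≤ R := by
    apply aas_gronwall_bound hα0 hα1 hβ.le (by positivity : (0:ℝ) ≤ K * M₀) hR0 hRineq
    intro n
    have hvoc := aas_voc (fun _ => Linf) 0 y (fun s => Ninf (y s)) (fun s => hyrec s) n
    simp only [aas_transOp_const] at hvoc
    have hy0 : y 0 = a := rfl
    have hNb : ∀ s : ℕ, ‖Ninf (y s)‖ ≤ Lc * ‖y s‖ + M₀ := by
      intro s
      have h1 := hNinfLip _ (hyU s) _ (hAU ha₀)
      have h2 : ‖Ninf (y s)‖ - ‖Ninf a₀‖ ≤ ‖Ninf (y s) - Ninf a₀‖ :=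
        norm_sub_norm_le _ _
      have h3 : ‖y s - a₀‖ ≤ ‖y s‖ + ‖a₀‖ := norm_sub_le _ _
      have h4 : ‖a₀‖ ≤ rA := hrA a₀ ha₀
      rw [hM₀def]
      nlinarith
    have hterm : ∀ s ∈ Finset.range n,
        ‖(Linf ^ (n - 1 - s)) (Ninf (y s))‖
          ≤ α ^ (n - 1 - s) * (K * Lc * ‖y s‖ + K * M₀) := by
      intro s _
      calc ‖(Linf ^ (n - 1 - s)) (Ninf (y s))‖
          ≤ K * α ^ (n - 1 - s) * ‖Ninf (y s)‖ := hLinfPow _ _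
        _ ≤ K * α ^ (n - 1 - s) * (Lc * ‖y s‖ + M₀) :=
            mul_le_mul_of_nonneg_left (hNb s) (by positivity)
        _ = α ^ (n - 1 - s) * (K * Lc * ‖y s‖ + K * M₀) := by ring
    calc ‖y n‖ = ‖(Linf ^ n) (y 0)
          + ∑ s ∈ Finset.range n, (Linf ^ (n - 1 - s)) (Ninf (y s))‖ := by rw [← hvoc]
      _ ≤ ‖(Linf ^ n) (y 0)‖
          + ‖∑ s ∈ Finset.range n, (Linf ^ (n - 1 - s)) (Ninf (y s))‖ := norm_add_le _ _
      _ ≤ K * rA + ∑ s ∈ Finset.range n,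
            α ^ (n - 1 - s) * (K * Lc * ‖y s‖ + K * M₀) := by
          gcongr
          · calc ‖(Linf ^ n) (y 0)‖ ≤ K * α ^ n * ‖y 0‖ := hLinfPow _ _
              _ ≤ K * 1 * rA := by
                  rw [hy0]
                  apply mul_le_mul _ (hrA a ha) (norm_nonneg _) (by positivity)
                  exact mul_le_mul_of_nonneg_left (pow_le_one₀ hα0.le hα1.le) hK0.le
              _ = K * rA := by ring
          · exact norm_sum_le_of_le _ hterm
  have hyr : ∀ n, ‖y n‖ ≤ r := fun n => le_trans (hz n) (le_max_left _ _)
  -- difference of solutions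
  have herec : ∀ n, x (n + 1) - y (n + 1)
      = L (τ + (n : ℤ)) (x n - y n)
        + ((L (τ + (n : ℤ)) - Linf) (y n)
          + (N (τ + (n : ℤ)) (x n) - N (τ + (n : ℤ)) (y n))
          + (N (τ + (n : ℤ)) (y n) - Ninf (y n))) := by
    intro n
    rw [hxrec n, hyrec n, map_sub, ContinuousLinearMap.sub_apply]
    abel
  have he0 : x 0 - y 0 = 0 := by
    have h1 : x 0 = a := rfl
    have h2 : y 0 = a := rfl
    rw [h1, h2, sub_self]
  have hgb : ∀ s : ℕ, ‖(L (τ + (s : ℤ)) - Linf) (y s)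
        + (N (τ + (s : ℤ)) (x s) - N (τ + (s : ℤ)) (y s))
        + (N (τ + (s : ℤ)) (y s) - Ninf (y s))‖ ≤ Lc * ‖x s - y s‖ + E * α ^ s := by
    intro s
    have h1 : ‖(L (τ + (s : ℤ)) - Linf) (y s)‖ ≤ K₁ * α ^ (τ + (s : ℤ)) * r := by
      calc ‖(L (τ + (s : ℤ)) - Linf) (y s)‖
          ≤ ‖L (τ + (s : ℤ)) - Linf‖ * ‖y s‖ := ContinuousLinearMap.le_opNorm _ _
        _ ≤ K₁ * α ^ (τ + (s : ℤ)) * r :=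
            mul_le_mul (hLconv _ (hτn s)) (hyr s) (norm_nonneg _) (by positivity)
    have h2 : ‖N (τ + (s : ℤ)) (x s) - N (τ + (s : ℤ)) (y s)‖ ≤ Lc * ‖x s - y s‖ :=
      hNlip _ (hτn s) _ (hxU s) _ (hyU s)
    have h3 : ‖N (τ + (s : ℤ)) (y s) - Ninf (y s)‖ ≤ K₂ * α ^ (τ + (s : ℤ)) :=
      hK₂ _ (hτn s) _ (hyU s) (hyr s)
    have h4 : K₁ * α ^ (τ + (s : ℤ)) * r + K₂ * α ^ (τ + (s : ℤ)) = E * α ^ s := by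
      rw [hEdef, zpow_add₀ (ne_of_gt hα0), zpow_natCast]
      ring
    calc ‖(L (τ + (s : ℤ)) - Linf) (y s)
          + (N (τ + (s : ℤ)) (x s) - N (τ + (s : ℤ)) (y s))
          + (N (τ + (s : ℤ)) (y s) - Ninf (y s))‖
        ≤ ‖(L (τ + (s : ℤ)) - Linf) (y s)‖
          + ‖N (τ + (s : ℤ)) (x s) - N (τ + (s : ℤ)) (y s)‖
          + ‖N (τ + (s : ℤ)) (y s) - Ninf (y s)‖ := norm_add₃_le
      _ ≤ K₁ * α ^ (τ + (s : ℤ)) * r + Lc * ‖x s - y s‖ + K₂ * α ^ (τ + (s : ℤ)) := by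
          gcongr
      _ = Lc * ‖x s - y s‖ + E * α ^ s := by rw [← h4]; ring
  have hEst : ∀ n, ‖x n - y n‖ ≤ ∑ s ∈ Finset.range n,
      α ^ (n - 1 - s) * (K * Lc * ‖x s - y s‖ + (K * E) * α ^ s) := by
    intro n
    have hevoc' := aas_voc L τ (fun n => x n - y n)
      (fun n => (L (τ + (n : ℤ)) - Linf) (y n)
        + (N (τ + (n : ℤ)) (x n) - N (τ + (n : ℤ)) (y n))
        + (N (τ + (n : ℤ)) (y n) - Ninf (y n))) (fun n => herec n) n
    rw [he0, map_zero, zero_add] at hevoc'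
    rw [hevoc']
    apply norm_sum_le_of_le
    intro s hs
    calc ‖transOp L (τ + (s : ℤ) + 1) (n - 1 - s)
          ((L (τ + (s : ℤ)) - Linf) (y s)
            + (N (τ + (s : ℤ)) (x s) - N (τ + (s : ℤ)) (y s))
            + (N (τ + (s : ℤ)) (y s) - Ninf (y s)))‖
        ≤ ‖transOp L (τ + (s : ℤ) + 1) (n - 1 - s)‖
          * ‖(L (τ + (s : ℤ)) - Linf) (y s)
            + (N (τ + (s : ℤ)) (x s) - N (τ + (s : ℤ)) (y s))
            + (N (τ + (s : ℤ)) (y s) - Ninf (y s))‖ :=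
          ContinuousLinearMap.le_opNorm _ _
      _ ≤ (K * α ^ (n - 1 - s)) * (Lc * ‖x s - y s‖ + E * α ^ s) :=
          mul_le_mul (hΦ' _ (hτn1 s) _) (hgb s) (norm_nonneg _) (by positivity)
      _ = α ^ (n - 1 - s) * (K * Lc * ‖x s - y s‖ + (K * E) * α ^ s) := by ring
  have final := aas_gronwall_exp hα0 hβ (by positivity : (0:ℝ) ≤ K * E)
    (fun n => ‖x n - y n‖) hEst t
  have hphi : phi Ft (τ + (t : ℤ)) τ a = x t := by
    rw [phi, hxdef]
    congr 1
    omega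
  have hyt : F^[t] a = y t := rfl
  rw [hphi, hyt]
  calc ‖x t - y t‖ ≤ (K * E / (K * Lc)) * ((α + K * Lc) ^ t - α ^ t) := final
    _ ≤ (K * E / (K * Lc)) * (α + K * Lc) ^ t := by
        have := pow_nonneg hα0.le t
        nlinarith [div_nonneg (by positivity : (0:ℝ) ≤ K * E) hβ.le]
end

section
/- Let X be a Banach space, I a discrete interval unbounded above, U ⊆ X closed, ρ > 0, and let F_t = L_t + N_t : U → U be semilinear with ‖Φ(t,s)‖ ≤ K·∏_{r=s}^{t-1} α_r for all s ≤ t (K ≥ 1, α_t ≥ 0) and ‖N_t(u)‖ ≤ b_t + a_t‖u‖ for all t and u ∈ U (a_t, b_t ≥ 0). If for every τ ∈ I one has lim_{s→∞} ∏_{r=τ}^{τ+s−1}(α_r + K a_r) = 0 and R_τ := K·lim_{t→∞} ∑_{s=τ}^{t−1} b_s·∏_{r=s+1}^{t−1}(α_r + K a_r) < ∞, and moreover sup_{τ∈I} R_τ < ∞, then (Δ) is forward dissipative with forward absorbing set 𝓐 := {(t,u) ∈ I×U : ‖u‖ ≤ ρ + sup_{τ∈I} R_τ}: for every τ ∈ I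 and every bounded nonautonomous set 𝓑 ⊆ I×U there exists S ∈ ℕ such that φ(τ+s;τ,𝓑(τ)) ⊆ 𝓐(τ+s) for all s ≥ S. -/
/-!
Along a solution, the variation of constants formula writes `u_{τ+n}` as `Φ(τ+n,τ) u_τ` plus the
sum of the propagated nonlinear terms `Φ(τ+n,τ+j+1) N(u_{τ+j})`. The growth bounds on `Φ` and `N`
turn this into an implicit inequality for `‖u_{τ+n}‖`, and a discrete Gronwall argument bounds
`‖u_{τ+n}‖` by `K ‖u_τ‖ ∏ (α + K a) + K ∑ b ∏ (α + K a)`. The first term tends to `0` uniformly on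
bounded sets and the second to `R_τ ≤ sup R`, so the slack `ρ > 0` is eventually absorbed.
-/

open Filter Topology Metric Bornology

open Finset

namespace Int

@[to_additive]
lemma prod_Ico_add_natCast {M : Type*} [CommMonoid M] (f : ℤ → M) (τ : ℤ) (m n : ℕ) :
    ∏ s ∈ Ico (τ + m) (τ + n), f s = ∏ j ∈ Ico m n, f (τ + j) := by
  refine prod_nbij' (fun s => (s - τ).toNat) (fun j => τ + j) ?_ ?_ ?_ ?_ ?_ <;>
    intro x hx <;> simp only [mem_Ico] at hx ⊢
  all_goals first | omega | (congr 1; omega)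

@[to_additive]
lemma prod_range_add_natCast {M : Type*} [CommMonoid M] (f : ℤ → M) (τ : ℤ) (n : ℕ) :
    ∏ j ∈ Finset.range n, f (τ + j) = ∏ s ∈ Ico τ (τ + n), f s := by
  simpa [← Finset.range_eq_Ico] using (prod_Ico_add_natCast f τ 0 n).symm

end Int

/-- The solution of `x (n + 1) = c n * x n + d n` with `x 0 = 0`. -/
def duhamelSum {R : Type*} [CommSemiring R] (c d : ℕ → R) (n : ℕ) : R :=
  ∑ j ∈ range n, d j * ∏ r ∈ Ico (j + 1) n, c r

section Duhamel

variable {R : Type*} [CommSemiring R] (c d : ℕ → R)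

@[simp]
lemma duhamelSum_zero : duhamelSum c d 0 = 0 := by
  simp [duhamelSum]

lemma duhamelSum_succ (n : ℕ) : duhamelSum c d (n + 1) = c n * duhamelSum c d n + d n := by
  rw [duhamelSum, sum_range_succ, Ico_self, prod_empty, mul_one, duhamelSum, mul_sum]
  congr 1
  refine sum_congr rfl fun j hj => ?_
  rw [prod_Ico_succ_top (by simpa using hj)]
  ring

lemma duhamelSum_const_mul (k : R) (n : ℕ) :
    duhamelSum c (fun j => k * d j) n = k * duhamelSum c d n := by
  simp only [duhamelSum, mul_sum, mul_assoc]

lemma duhamelSum_comp_add_natCast (c d : ℤ → R) (τ : ℤ) (n : ℕ) :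
    duhamelSum (fun r => c (τ + r)) (fun j => d (τ + j)) n
      = ∑ s ∈ Ico τ (τ + n), d s * ∏ r ∈ Ico (s + 1) (τ + n), c r := by
  rw [duhamelSum, ← Int.sum_range_add_natCast]
  refine sum_congr rfl fun j _ => ?_
  rw [show τ + (j : ℤ) + 1 = τ + ↑(j + 1) by push_cast; ring, Int.prod_Ico_add_natCast]

end Duhamel

section Gronwall

variable {R : Type*} [CommSemiring R] [PartialOrder R] [IsOrderedRing R] {c d w : ℕ → R}

lemma le_prod_mul_add_duhamelSum (hc : ∀ n, 0 ≤ c n) (hw : ∀ n, w (n + 1) ≤ c n * w n + d n)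
    (n : ℕ) : w n ≤ (∏ r ∈ range n, c r) * w 0 + duhamelSum c d n := by
  induction n with
  | zero => simp
  | succ n ih =>
    calc w (n + 1) ≤ c n * w n + d n := hw n
      _ ≤ c n * ((∏ r ∈ range n, c r) * w 0 + duhamelSum c d n) + d n := by gcongr; exact hc n
      _ = (∏ r ∈ range (n + 1), c r) * w 0 + duhamelSum c d (n + 1) := by
        rw [prod_range_succ, duhamelSum_succ]; ring

/-- Discrete Gronwall inequality for the implicit bound produced by variation of constants. -/
lemma le_of_le_mul_prod_add_duhamelSum {K x : R} {α a b v : ℕ → R} (hK : 0 ≤ K)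
    (hα : ∀ n, 0 ≤ α n) (ha : ∀ n, 0 ≤ a n)
    (hv : ∀ n, v n ≤ K * x * ∏ r ∈ range n, α r
      + K * duhamelSum α (fun j => b j + a j * v j) n) (n : ℕ) :
    v n ≤ K * x * ∏ r ∈ range n, (α r + K * a r)
      + K * duhamelSum (fun r => α r + K * a r) b n := by
  set w : ℕ → R := fun n => K * x * ∏ r ∈ range n, α r
    + K * duhamelSum α (fun j => b j + a j * v j) n
  -- `v ≤ w` turns the exact recursion of `w` into an affine recursive inequality
  have hw : ∀ n, w (n + 1) ≤ (α n + K * a n) * w n + K * b n := fun n => by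
    have hKa : 0 ≤ K * a n := mul_nonneg hK (ha n)
    calc w (n + 1) = α n * w n + K * b n + K * a n * v n := by
          simp only [w, prod_range_succ, duhamelSum_succ]; ring
      _ ≤ α n * w n + K * b n + K * a n * w n := by gcongr; exact hv n
      _ = (α n + K * a n) * w n + K * b n := by ring
  have hc : ∀ n, 0 ≤ α n + K * a n := fun n => add_nonneg (hα n) (mul_nonneg hK (ha n))
  calc v n ≤ w n := hv n
    _ ≤ _ := le_prod_mul_add_duhamelSum hc hw n
    _ = _ := by simp [w, duhamelSum_const_mul, mul_comm]

end Gronwall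

section Solution

variable {X : Type*} {F : ℤ → X → X} {τ : ℤ} {u : X}

lemma phi_add_natCast (F : ℤ → X → X) (τ : ℤ) (u : X) (n : ℕ) :
    phi F (τ + n) τ u = sol F τ u n := by
  simp [phi]

lemma sol_mem {U : Set X} (hF : ∀ n : ℕ, Set.MapsTo (F (τ + n)) U U) (hu : u ∈ U) :
    ∀ n, sol F τ u n ∈ U
  | 0 => hu
  | n + 1 => hF n (sol_mem hF hu n)

end Solution

section Semilinear

variable {X : Type*} [NormedAddCommGroup X] [NormedSpace ℝ X]
  {L : ℤ → X →L[ℝ] X} {N F : ℤ → X → X} {τ : ℤ} {u : X}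

lemma transOp_succ_apply {s t : ℤ} {m : ℕ} (h : s + m = t) (x : X) :
    transOp L s (m + 1) x = L t (transOp L s m x) := by
  subst h; rfl

lemma sol_eq_transOp_add_sum
    (hF : ∀ n : ℕ, F (τ + n) (sol F τ u n) = L (τ + n) (sol F τ u n) + N (τ + n) (sol F τ u n))
    (n : ℕ) :
    sol F τ u n = transOp L τ n u
      + ∑ j ∈ range n, transOp L (τ + ↑(j + 1)) (n - (j + 1)) (N (τ + j) (sol F τ u j)) := by
  induction n with
  | zero => simp [sol, transOp]
  | succ n ih =>
    have hshift : ∀ j ∈ range n,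
        transOp L (τ + ↑(j + 1)) (n + 1 - (j + 1)) (N (τ + j) (sol F τ u j))
          = L (τ + n) (transOp L (τ + ↑(j + 1)) (n - (j + 1)) (N (τ + j) (sol F τ u j))) := by
      intro j hj
      have hjn := mem_range.1 hj
      rw [show n + 1 - (j + 1) = n - (j + 1) + 1 by omega]
      exact transOp_succ_apply (by push_cast; omega) _
    rw [show sol F τ u (n + 1) = F (τ + n) (sol F τ u n) from rfl, hF, sum_range_succ,
      sum_congr rfl hshift, ← map_sum, Nat.sub_self]
    nth_rewrite 1 [ih]
    rw [map_add, add_assoc]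
    rfl

lemma norm_sol_le {K C : ℝ} {α a b : ℕ → ℝ} (hu : ‖u‖ ≤ C)
    (hF : ∀ n : ℕ, F (τ + n) (sol F τ u n) = L (τ + n) (sol F τ u n) + N (τ + n) (sol F τ u n))
    (hΦ : ∀ j n : ℕ, j ≤ n → ‖transOp L (τ + j) (n - j)‖ ≤ K * ∏ r ∈ Ico j n, α r)
    (hN : ∀ n : ℕ, ‖N (τ + n) (sol F τ u n)‖ ≤ b n + a n * ‖sol F τ u n‖) (n : ℕ) :
    ‖sol F τ u n‖ ≤ K * C * ∏ r ∈ range n, α r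
      + K * duhamelSum α (fun j => b j + a j * ‖sol F τ u j‖) n := by
  have hfree : ‖transOp L τ n u‖ ≤ K * C * ∏ r ∈ range n, α r := by
    have hop : ‖transOp L τ n‖ ≤ K * ∏ r ∈ range n, α r := by
      have h := hΦ 0 n (Nat.zero_le n)
      rwa [Nat.cast_zero, add_zero, Nat.sub_zero, ← range_eq_Ico] at h
    calc _ ≤ (K * ∏ r ∈ range n, α r) * ‖u‖ := (transOp L τ n).le_of_opNorm_le hop u
      _ ≤ (K * ∏ r ∈ range n, α r) * C := by gcongr; exact (norm_nonneg _).trans hop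
      _ = _ := by ring
  have hterm : ∀ j ∈ range n,
      ‖transOp L (τ + ↑(j + 1)) (n - (j + 1)) (N (τ + j) (sol F τ u j))‖
        ≤ K * ((b j + a j * ‖sol F τ u j‖) * ∏ r ∈ Ico (j + 1) n, α r) := by
    intro j hj
    have hop := hΦ (j + 1) n (mem_range.1 hj)
    have hK : 0 ≤ K * ∏ r ∈ Ico (j + 1) n, α r := (norm_nonneg _).trans hop
    calc _ ≤ (K * ∏ r ∈ Ico (j + 1) n, α r) * ‖N (τ + j) (sol F τ u j)‖ :=
          ContinuousLinearMap.le_of_opNorm_le _ hop _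
      _ ≤ (K * ∏ r ∈ Ico (j + 1) n, α r) * (b j + a j * ‖sol F τ u j‖) := by gcongr; exact hN j
      _ = _ := by ring
  rw [sol_eq_transOp_add_sum hF, duhamelSum, mul_sum]
  exact (norm_add_le _ _).trans (add_le_add hfree ((norm_sum_le _ _).trans (sum_le_sum hterm)))

end Semilinear

theorem forward_absorbing_set_general
    {X : Type*} [NormedAddCommGroup X] [NormedSpace ℝ X]
    -- discrete interval I, unbounded above
    (I : Set ℤ) (hI : ∀ ⦃a b c : ℤ⦄, a ∈ I → c ∈ I → a ≤ b → b ≤ c → b ∈ I)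
    (hIub : ∀ t : ℤ, ∃ s ∈ I, t ≤ s)
    (ρ : ℝ) (hρ : 0 < ρ)
    -- closed state space U and semilinear right-hand sides F_t = L_t + N_t : U → U
    (U : Set X)
    (L : ℤ → X →L[ℝ] X) (N : ℤ → X → X)
    (F : ℤ → X → X)
    (hF : ∀ t ∈ I, ∀ u ∈ U, F t u = L t u + N t u)
    (hFmap : ∀ t ∈ I, ∀ u ∈ U, F t u ∈ U)
    (K : ℝ) (hK : 1 ≤ K) (α : ℤ → ℝ) (hα : ∀ t, 0 ≤ α t)
    (hΦ : ∀ s t : ℤ, s ∈ I → t ∈ I → s ≤ t →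
      ‖transOp L s (t - s).toNat‖ ≤ K * ∏ r ∈ Finset.Ico s t, α r)
    (a b : ℤ → ℝ) (ha : ∀ t, 0 ≤ a t)
    (hN : ∀ t ∈ I, ∀ u ∈ U, ‖N t u‖ ≤ b t + a t * ‖u‖)
    -- forward limit relations
    (hlim : ∀ τ ∈ I,
      Tendsto (fun s : ℕ => ∏ r ∈ Finset.Ico τ (τ + (s : ℤ)), (α r + K * a r)) atTop (𝓝 0))
    (R : ℤ → ℝ)
    (hR : ∀ τ ∈ I,
      Tendsto (fun n : ℕ =>
          K * ∑ s ∈ Finset.Ico τ (τ + (n : ℤ)),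
            b s * ∏ r ∈ Finset.Ico (s + 1) (τ + (n : ℤ)), (α r + K * a r))
        atTop (𝓝 (R τ)))
    -- the R_τ are uniformly bounded, with least upper bound Rsup
    (Rsup : ℝ) (hRsup : IsLUB {x : ℝ | ∃ τ ∈ I, x = R τ} Rsup) :
    -- (Δ) is forward dissipative with absorbing set 𝓐 = {(t,u) : ‖u‖ ≤ ρ + Rsup}
    ∀ τ ∈ I, ∀ B : ℤ → Set X, (∀ t ∈ I, B t ⊆ U) →
      (∃ C : ℝ, ∀ t ∈ I, ∀ u ∈ B t, ‖u‖ ≤ C) →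
      ∃ S : ℕ, ∀ s : ℕ, S ≤ s → ∀ u ∈ B τ,
        phi F (τ + (s : ℤ)) τ u ∈ U ∧ ‖phi F (τ + (s : ℤ)) τ u‖ ≤ ρ + Rsup := by
  intro τ hτ B hBU ⟨C, hC⟩
  have hmem (n : ℕ) : τ + n ∈ I := by
    obtain ⟨t, ht, hle⟩ := hIub (τ + n)
    exact hI hτ ht (by omega) hle
  have hΦτ (j n : ℕ) (hjn : j ≤ n) :
      ‖transOp L (τ + j) (n - j)‖ ≤ K * ∏ r ∈ Ico j n, α (τ + r) := by
    have h := hΦ _ _ (hmem j) (hmem n) (by omega)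
    rwa [show (τ + n - (τ + j)).toNat = n - j by omega, Int.prod_Ico_add_natCast] at h
  set bound : ℕ → ℝ := fun n => K * C * ∏ r ∈ range n, (α (τ + r) + K * a (τ + r))
    + K * duhamelSum (fun r => α (τ + r) + K * a (τ + r)) (fun j => b (τ + j)) n
  have hbound : Tendsto bound atTop (𝓝 (R τ)) := by
    have h := ((hlim τ hτ).const_mul (K * C)).add (hR τ hτ)
    rw [mul_zero, zero_add] at h
    refine h.congr fun n => ?_
    simp only [bound, duhamelSum_comp_add_natCast (fun r => α r + K * a r) b,
      Int.prod_range_add_natCast (fun r => α r + K * a r)]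
  obtain ⟨S, hS⟩ := eventually_atTop.1 <|
    hbound.eventually_lt_const (show R τ < ρ + Rsup by linarith [hRsup.1 ⟨τ, hτ, rfl⟩])
  refine ⟨S, fun s hs u hu => ?_⟩
  have hsolU := sol_mem (fun n x hx => hFmap _ (hmem n) x hx) (hBU τ hτ hu)
  have hnorm : ‖sol F τ u s‖ ≤ bound s :=
    le_of_le_mul_prod_add_duhamelSum (zero_le_one.trans hK) (fun n => hα _) (fun n => ha _)
      (norm_sol_le (hC τ hτ u hu) (fun n => hF _ (hmem n) _ (hsolU n)) hΦτ
        (fun n => hN _ (hmem n) _ (hsolU n))) s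
  rw [phi_add_natCast]
  exact ⟨hsolU s, by linarith [hS s hs]⟩

/-- forward absorbing sets of semilinear difference equations
(Proposition 4 of the paper). -/
theorem forward_absorbing_set
    {X : Type*} [NormedAddCommGroup X] [NormedSpace ℝ X] [CompleteSpace X]
    -- discrete interval I, unbounded above
    (I : Set ℤ) (hI : ∀ ⦃a b c : ℤ⦄, a ∈ I → c ∈ I → a ≤ b → b ≤ c → b ∈ I)
    (hIub : ∀ t : ℤ, ∃ s ∈ I, t ≤ s)
    (ρ : ℝ) (hρ : 0 < ρ)
    -- closed state space U and semilinear right-hand sides F_t = L_t + N_t : U → U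
    (U : Set X) (hUcl : IsClosed U)
    (L : ℤ → X →L[ℝ] X) (N : ℤ → X → X)
    (hNcont : ∀ t ∈ I, ContinuousOn (N t) U)
    (F : ℤ → X → X)
    (hF : ∀ t ∈ I, ∀ u ∈ U, F t u = L t u + N t u)
    (hFmap : ∀ t ∈ I, ∀ u ∈ U, F t u ∈ U)
    (K : ℝ) (hK : 1 ≤ K) (α : ℤ → ℝ) (hα : ∀ t, 0 ≤ α t)
    (hΦ : ∀ s t : ℤ, s ∈ I → t ∈ I → s ≤ t →
      ‖transOp L s (t - s).toNat‖ ≤ K * ∏ r ∈ Finset.Ico s t, α r)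
    (a b : ℤ → ℝ) (ha : ∀ t, 0 ≤ a t) (hb : ∀ t, 0 ≤ b t)
    (hN : ∀ t ∈ I, ∀ u ∈ U, ‖N t u‖ ≤ b t + a t * ‖u‖)
    -- forward limit relations
    (hlim : ∀ τ ∈ I,
      Tendsto (fun s : ℕ => ∏ r ∈ Finset.Ico τ (τ + (s : ℤ)), (α r + K * a r)) atTop (𝓝 0))
    (R : ℤ → ℝ)
    (hR : ∀ τ ∈ I,
      Tendsto (fun n : ℕ =>
          K * ∑ s ∈ Finset.Ico τ (τ + (n : ℤ)),
            b s * ∏ r ∈ Finset.Ico (s + 1) (τ + (n : ℤ)), (α r + K * a r))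
        atTop (𝓝 (R τ)))
    -- the R_τ are uniformly bounded, with least upper bound Rsup
    (Rsup : ℝ) (hRsup : IsLUB {x : ℝ | ∃ τ ∈ I, x = R τ} Rsup) :
    -- (Δ) is forward dissipative with absorbing set 𝓐 = {(t,u) : ‖u‖ ≤ ρ + Rsup}
    ∀ τ ∈ I, ∀ B : ℤ → Set X, (∀ t ∈ I, B t ⊆ U) →
      (∃ C : ℝ, ∀ t ∈ I, ∀ u ∈ B t, ‖u‖ ≤ C) →
      ∃ S : ℕ, ∀ s : ℕ, S ≤ s → ∀ u ∈ B τ,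
        phi F (τ + (s : ℤ)) τ u ∈ U ∧ ‖phi F (τ + (s : ℤ)) τ u‖ ≤ ρ + Rsup :=
  forward_absorbing_set_general I hI hIub ρ hρ U L N F hF hFmap K hK α hα hΦ a b ha hN hlim R hR
    Rsup hRsup
end
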